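/- arXiv:0901.4644 — 6 statements merged into one kernel-verified Lean document; each statement's English description precedes it below -/
import Mathlib

section
/- Let n, N, m be positive integers with n + 1 ≤ N, and let Δ = (Δ_1, …, Δ_m) ∈ ℝ^m. Suppose that for every positive integer k there exists an index i ∈ {1, …, m} such that the fractional part Int.fract(k·Δ_i/(2N)) lies in the interval [0, n/N] (equivalently, k·Δ_i mod 2Nℤ lies in [0, 2n]). Then there exists a nonzero integer vector a = (a_1, …, a_m) ∈ ℤ^m such that a_1·Δ_1 + … + a_m·Δ_m ∈ 2N·ℤ. -/
/-!
Put `x = Δ / (2N)`, `c = n / N` and `ρ = sin² (π c / 2) < 1`. The hypothesis says that for every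
`k ≥ 1` some coordinate satisfies `cos² (π (k xᵢ - (1 + c) / 2)) ≤ ρ`, so the nonnegative
trigonometric polynomial `P t = ∏ᵢ (4 cos² (π (tᵢ - (1 + c) / 2)))^R` is at most `(4^m ρ)^R`
along the orbit `k x`. If `x` satisfied no resonance relation, every nonconstant character
`k ↦ exp (2πi k ⟪a, x⟫)` would have Cesàro mean zero, so the Cesàro means of `P (k x)` would tend
to the constant term `(centralBinom R)^m` of `P`. As `centralBinom R ≥ 4^R / (2R)`, this exceeds
`(4^m ρ)^R` once `R` is large.
-/

open Finset Filter Topology Real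

lemma ofReal_four_mul_cos_sq_pow (R : ℕ) (t : ℝ) :
    (((4 * cos (π * t) ^ 2) ^ R : ℝ) : ℂ) =
      ∑ j ∈ range (2 * R + 1),
        (Nat.choose (2 * R) j : ℂ) * Complex.exp (2 * π * Complex.I * (t * ((j : ℝ) - R))) := by
  set v := Complex.exp (-(π * t) * Complex.I)
  set y := Complex.exp (2 * π * Complex.I * t)
  have hcos : ((4 * cos (π * t) ^ 2 : ℝ) : ℂ) = (v * (y + 1)) ^ 2 := by
    have : v * (y + 1) = 2 * Complex.cos (π * t) := by
      rw [Complex.two_cos, mul_add, mul_one, ← Complex.exp_add]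
      congr 2
      ring
    push_cast
    rw [this]
    ring
  have hterm (j : ℕ) :
      Complex.exp (2 * π * Complex.I * (t * ((j : ℝ) - R))) = v ^ (2 * R) * y ^ j := by
    rw [← Complex.exp_nat_mul, ← Complex.exp_nat_mul, ← Complex.exp_add]
    congr 1
    push_cast
    ring
  rw [Complex.ofReal_pow, hcos, ← pow_mul, mul_pow, add_pow, mul_sum]
  refine sum_congr rfl fun j _ => ?_
  rw [hterm, one_pow]
  ring

lemma ofReal_prod_four_mul_cos_sq_pow {ι : Type*} [Fintype ι] [DecidableEq ι] (R k : ℕ)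
    (x : ι → ℝ) (b : ℝ) :
    ((∏ i, (4 * cos (π * (k * x i - b)) ^ 2) ^ R : ℝ) : ℂ) =
      ∑ j ∈ Fintype.piFinset fun _ => range (2 * R + 1),
        (∏ i, (Nat.choose (2 * R) (j i) : ℂ) *
            Complex.exp (2 * π * Complex.I * (-b * ((j i : ℝ) - R)))) *
          Complex.exp (2 * π * Complex.I * ∑ i, x i * ((j i : ℝ) - R)) ^ k := by
  simp_rw [Complex.ofReal_prod, ofReal_four_mul_cos_sq_pow, prod_univ_sum]
  refine sum_congr rfl fun j _ => ?_
  push_cast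
  rw [← Complex.exp_nat_mul, mul_sum, mul_sum, Complex.exp_sum, ← prod_mul_distrib]
  refine prod_congr rfl fun i _ => ?_
  rw [mul_assoc _ (Complex.exp _), ← Complex.exp_add]
  congr 2
  ring

lemma norm_sum_range_pow_succ_le {z : ℂ} (hz : ‖z‖ ≤ 1) (hz1 : z ≠ 1) (K : ℕ) :
    ‖∑ k ∈ range K, z ^ (k + 1)‖ ≤ 2 / ‖z - 1‖ := by
  have hK : ‖z ^ K - 1‖ ≤ 2 := by
    calc ‖z ^ K - 1‖ ≤ ‖z ^ K‖ + ‖(1 : ℂ)‖ := norm_sub_le _ _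
      _ ≤ 1 + 1 := by
        rw [norm_pow, norm_one]
        gcongr
        exact pow_le_one₀ (norm_nonneg z) hz
      _ = 2 := by norm_num
  simp_rw [pow_succ, ← sum_mul, geom_sum_eq hz1, norm_mul, norm_div]
  calc ‖z ^ K - 1‖ / ‖z - 1‖ * ‖z‖ ≤ 2 / ‖z - 1‖ * 1 := by gcongr
    _ = 2 / ‖z - 1‖ := mul_one _

lemma tendsto_inv_mul_sum_range_pow_succ {z : ℂ} (hz : ‖z‖ ≤ 1) (hz1 : z ≠ 1) :
    Tendsto (fun K : ℕ => (K : ℂ)⁻¹ * ∑ k ∈ range K, z ^ (k + 1)) atTop (𝓝 0) := by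
  refine squeeze_zero_norm (fun K => ?_) (tendsto_const_div_atTop_nhds_zero_nat (2 / ‖z - 1‖))
  rw [norm_mul, norm_inv, Complex.norm_natCast, div_eq_inv_mul _ (K : ℝ)]
  exact mul_le_mul_of_nonneg_left (norm_sum_range_pow_succ_le hz hz1 K) (by positivity)

lemma tendsto_inv_mul_sum_range_sum_mul_pow_succ {ι : Type*} {S : Finset ι} {j₀ : ι}
    (hj₀ : j₀ ∈ S) (w z : ι → ℂ) (hz : ∀ j ∈ S, ‖z j‖ ≤ 1) (hz₀ : z j₀ = 1)
    (hne : ∀ j ∈ S, j ≠ j₀ → z j ≠ 1) :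
    Tendsto (fun K : ℕ => (K : ℂ)⁻¹ * ∑ k ∈ range K, ∑ j ∈ S, w j * z j ^ (k + 1)) atTop
      (𝓝 (w j₀)) := by
  classical
  have hterm : ∀ j ∈ S, Tendsto (fun K : ℕ => w j * ((K : ℂ)⁻¹ * ∑ k ∈ range K, z j ^ (k + 1)))
      atTop (𝓝 (if j₀ = j then w j else 0)) := by
    intro j hj
    split_ifs with hj₀j
    · subst hj₀j
      refine tendsto_const_nhds.congr' ?_
      filter_upwards [eventually_ne_atTop 0] with K hK
      simp [hz₀, hK]
    · simpa using (tendsto_inv_mul_sum_range_pow_succ (hz j hj)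
        (hne j hj (Ne.symm hj₀j))).const_mul (w j)
  convert tendsto_finsetSum S hterm using 1
  · ext K
    simp_rw [sum_comm (s := range K), mul_sum, mul_left_comm]
  · simp [hj₀]

lemma prod_le_mul_pow_card {ι : Type*} [Fintype ι] {f : ι → ℝ} {M ρ : ℝ} (i₀ : ι)
    (hf₀ : ∀ i, 0 ≤ f i) (hfM : ∀ i, f i ≤ M) (hi₀ : f i₀ ≤ ρ * M) :
    ∏ i, f i ≤ ρ * M ^ Fintype.card ι := by
  classical
  have : Nonempty ι := ⟨i₀⟩
  have hcard : Fintype.card ι = (univ.erase i₀).card + 1 := by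
    rw [card_erase_of_mem (mem_univ i₀), card_univ, Nat.sub_add_cancel Fintype.card_pos]
  rw [← mul_prod_erase univ f (mem_univ i₀), hcard, pow_succ, mul_comm (M ^ _) M, ← mul_assoc,
    ← prod_const]
  exact mul_le_mul hi₀ (prod_le_prod (fun i _ => hf₀ i) fun i _ => hfM i)
    (prod_nonneg fun i _ => hf₀ i) ((hf₀ i₀).trans hi₀)

lemma cos_sq_le_sin_sq_of_fract_mem_Icc {c t : ℝ} (hc : c ≤ 1) (ht : Int.fract t ∈ Set.Icc 0 c) :
    cos (π * (t - (1 + c) / 2)) ^ 2 ≤ sin (π * c / 2) ^ 2 := by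
  obtain ⟨hf₀, hfc⟩ := ht
  have hu : |π * (Int.fract t - c / 2)| ≤ π * c / 2 := by
    rw [abs_le]
    constructor <;> nlinarith [pi_pos]
  have harg : π * (t - (1 + c) / 2) = π * (Int.fract t - c / 2) - π / 2 + ⌊t⌋ * π := by
    rw [Int.fract]
    ring
  rw [← sq_abs]
  refine pow_le_pow_left₀ (abs_nonneg _) ?_ 2
  rw [harg, cos_add_int_mul_pi, abs_mul, abs_neg_one_zpow, one_mul, cos_sub_pi_div_two,
    abs_sin_eq_sin_abs_of_abs_le_pi (hu.trans (by nlinarith [pi_pos]))]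
  exact sin_le_sin_of_le_of_le_pi_div_two
    (by linarith [abs_nonneg (π * (Int.fract t - c / 2)), pi_pos]) (by nlinarith [pi_pos]) hu

lemma exists_mul_four_pow_pow_lt_centralBinom_pow (m : ℕ) {ρ : ℝ} (hρ₀ : 0 ≤ ρ) (hρ₁ : ρ < 1) :
    ∃ R : ℕ, (ρ * 4 ^ m) ^ R < (Nat.centralBinom R : ℝ) ^ m := by
  have hlim : Tendsto (fun R : ℕ => 2 ^ m * ((R : ℝ) ^ m * ρ ^ R)) atTop (𝓝 0) := by
    simpa using (tendsto_pow_const_mul_const_pow_of_abs_lt_one m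
      (by rwa [abs_of_nonneg hρ₀])).const_mul (2 ^ m : ℝ)
  obtain ⟨R, hR, hR₀⟩ :=
    ((hlim.eventually (gt_mem_nhds one_pos)).and (eventually_gt_atTop 0)).exists
  refine ⟨R, ?_⟩
  have hC : (0 : ℝ) < Nat.centralBinom R := by exact_mod_cast Nat.centralBinom_pos R
  have h4 : (4 : ℝ) ^ R ≤ 2 * R * Nat.centralBinom R := by
    exact_mod_cast Nat.four_pow_le_two_mul_self_mul_centralBinom R hR₀
  calc (ρ * 4 ^ m) ^ R = ρ ^ R * ((4 : ℝ) ^ R) ^ m := by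
        rw [mul_pow, ← pow_mul, ← pow_mul, mul_comm m]
    _ ≤ ρ ^ R * (2 * R * Nat.centralBinom R) ^ m := by gcongr
    _ = 2 ^ m * ((R : ℝ) ^ m * ρ ^ R) * (Nat.centralBinom R : ℝ) ^ m := by ring
    _ < 1 * (Nat.centralBinom R : ℝ) ^ m := by gcongr
    _ = _ := one_mul _

lemma exists_int_eq_of_exp_two_pi_mul_I_mul_eq_one {θ : ℝ}
    (h : Complex.exp (2 * π * Complex.I * θ) = 1) : ∃ z : ℤ, θ = z := by
  obtain ⟨z, hz⟩ := Complex.exp_eq_one_iff.mp h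
  refine ⟨z, Complex.ofReal_injective ?_⟩
  have h2πI : 2 * π * Complex.I ≠ 0 := by simp [pi_ne_zero]
  apply mul_left_cancel₀ h2πI
  rw [hz]
  push_cast
  ring

lemma tendsto_inv_mul_sum_range_prod_four_mul_cos_sq_pow {ι : Type*} [Fintype ι] (x : ι → ℝ)
    (b : ℝ) (R : ℕ) (hx : ∀ a : ι → ℤ, a ≠ 0 → ∀ z : ℤ, ∑ i, (a i : ℝ) * x i ≠ z) :
    Tendsto (fun K : ℕ => (K : ℝ)⁻¹ *
        ∑ k ∈ range K, ∏ i, (4 * cos (π * ((k + 1 : ℕ) * x i - b)) ^ 2) ^ R)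
      atTop (𝓝 ((Nat.centralBinom R : ℝ) ^ Fintype.card ι)) := by
  classical
  set w : (ι → ℕ) → ℂ := fun j => ∏ i, (Nat.choose (2 * R) (j i) : ℂ) *
    Complex.exp (2 * π * Complex.I * (-b * ((j i : ℝ) - R)))
  set z : (ι → ℕ) → ℂ := fun j => Complex.exp (2 * π * Complex.I * ∑ i, x i * ((j i : ℝ) - R))
  have hz (j : ι → ℕ) : ‖z j‖ ≤ 1 := by simp [z, Complex.norm_exp]
  have hne (j : ι → ℕ) (hj : j ≠ fun _ => R) : z j ≠ 1 := by
    intro hzj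
    obtain ⟨q, hq⟩ := exists_int_eq_of_exp_two_pi_mul_I_mul_eq_one hzj
    refine hx (fun i => j i - R) (fun ha => hj (funext fun i => ?_)) q ?_
    · simpa [sub_eq_zero] using congrFun ha i
    · rw [← hq]
      push_cast
      exact sum_congr rfl fun i _ => mul_comm _ _
  have hlim := tendsto_inv_mul_sum_range_sum_mul_pow_succ
    (S := Fintype.piFinset fun _ => range (2 * R + 1)) (j₀ := fun _ => R)
    (Fintype.mem_piFinset.mpr fun _ => mem_range.mpr (by omega)) w z
    (fun j _ => hz j) (by simp [z]) (fun j _ => hne j)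
  have hw : w (fun _ => R) = ((Nat.centralBinom R : ℝ) ^ Fintype.card ι : ℝ) := by
    simp [w, Nat.centralBinom]
  rw [hw] at hlim
  rw [← tendsto_ofReal_iff]
  refine hlim.congr fun K => ?_
  simp only [Complex.ofReal_mul, Complex.ofReal_inv, Complex.ofReal_natCast, Complex.ofReal_sum,
    ofReal_prod_four_mul_cos_sq_pow, w, z]

theorem exists_int_relation_of_forall_exists_cos_sq_le {ι : Type*} [Fintype ι] (x : ι → ℝ)
    {b ρ : ℝ} (hρ : ρ < 1) (h : ∀ k : ℕ, 0 < k → ∃ i, cos (π * (k * x i - b)) ^ 2 ≤ ρ) :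
    ∃ a : ι → ℤ, a ≠ 0 ∧ ∃ z : ℤ, ∑ i, (a i : ℝ) * x i = z := by
  by_contra! hx
  obtain ⟨i₀, hi₀⟩ := h 1 one_pos
  have hρ₀ : 0 ≤ ρ := (sq_nonneg _).trans hi₀
  obtain ⟨R, hR⟩ := exists_mul_four_pow_pow_lt_centralBinom_pow (Fintype.card ι) hρ₀ hρ
  have hbound (k : ℕ) : ∏ i, (4 * cos (π * ((k + 1 : ℕ) * x i - b)) ^ 2) ^ R ≤
      (ρ * 4 ^ Fintype.card ι) ^ R := by
    obtain ⟨i, hi⟩ := h (k + 1) k.succ_pos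
    rw [prod_pow]
    refine pow_le_pow_left₀ (prod_nonneg fun _ _ => by positivity)
      (prod_le_mul_pow_card i (fun _ => by positivity) (fun j => ?_) (by linarith)) R
    nlinarith [cos_sq_le_one (π * ((k + 1 : ℕ) * x j - b))]
  refine hR.not_ge (le_of_tendsto (tendsto_inv_mul_sum_range_prod_four_mul_cos_sq_pow x b R hx) ?_)
  filter_upwards [eventually_gt_atTop 0] with K hK
  rw [inv_mul_le_iff₀ (by positivity)]
  exact (sum_le_card_nsmul _ _ _ fun k _ => hbound k).trans_eq (by simp)

theorem stmt_0_general (n N m : ℕ) (hN : n + 1 ≤ N)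
    (Δ : Fin m → ℝ)
    (h : ∀ k : ℕ, 0 < k →
      ∃ i : Fin m, Int.fract ((k : ℝ) * Δ i / (2 * N)) ∈ Set.Icc 0 ((n : ℝ) / N)) :
    ∃ a : Fin m → ℤ, a ≠ 0 ∧ ∃ z : ℤ, ∑ i, (a i : ℝ) * Δ i = 2 * N * z := by
  have hN₀ : (0 : ℝ) < N := by exact_mod_cast (Nat.succ_pos n).trans_le hN
  have hc₀ : (0 : ℝ) ≤ n / N := by positivity
  have hc₁ : (n : ℝ) / N < 1 := by
    rw [div_lt_one hN₀]
    exact_mod_cast hN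
  have hρ : sin (π * (n / N) / 2) ^ 2 < 1 := by
    have hcos : 0 < cos (π * (n / N) / 2) :=
      cos_pos_of_mem_Ioo ⟨by nlinarith [pi_pos], by nlinarith [pi_pos]⟩
    nlinarith [sin_sq_add_cos_sq (π * (n / N) / 2)]
  have hcos (k : ℕ) (hk : 0 < k) :
      ∃ i, cos (π * (k * (Δ i / (2 * N)) - (1 + n / N) / 2)) ^ 2 ≤ sin (π * (n / N) / 2) ^ 2 := by
    obtain ⟨i, hi⟩ := h k hk
    exact ⟨i, by simpa only [mul_div_assoc] using cos_sq_le_sin_sq_of_fract_mem_Icc hc₁.le hi⟩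
  obtain ⟨a, ha, z, hz⟩ := exists_int_relation_of_forall_exists_cos_sq_le _ hρ hcos
  refine ⟨a, ha, z, ?_⟩
  rw [← hz, mul_sum]
  exact sum_congr rfl fun i _ => by field_simp

/-- Torus-dynamics core of Theorem 1.1(i): if for every positive iterate `k`
some coordinate of `k • Δ/(2N)` has fractional part in `[0, n/N]`, then the
mean indices satisfy a non-trivial resonance relation modulo `2N`. -/
theorem stmt_0 (n N m : ℕ) (hn : 0 < n) (hN : n + 1 ≤ N) (hm : 0 < m)
    (Δ : Fin m → ℝ)
    (h : ∀ k : ℕ, 0 < k →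
      ∃ i : Fin m, Int.fract ((k : ℝ) * Δ i / (2 * N)) ∈ Set.Icc 0 ((n : ℝ) / N)) :
    ∃ a : Fin m → ℤ, a ≠ 0 ∧ ∃ z : ℤ, ∑ i, (a i : ℝ) * Δ i = 2 * N * z :=
  stmt_0_general n N m hN Δ h
end

section
/- Let n, N, m be positive integers with n + 1 ≤ N, and let Δ ∈ ℝ^m be such that for every positive integer k there exists an index i with Int.fract(k·Δ_i/(2N)) ∈ [0, n/N]. Let R = {a ∈ ℤ^m : a_1·Δ_1 + … + a_m·Δ_m ∈ 2N·ℤ} and suppose R is generated by a single vector a₀ ∈ ℤ^m (i.e., R = ℤ·a₀) which has at least one strictly positive component. Then every component of a₀ is non-negative: (a₀)_i ≥ 0 for all i. -/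
/-!
If `a₀` had entries of both signs, some `v` with all `v i ∈ (β - 1, 0)`, where `β = n / N`,
would be orthogonal to `a₀`, hence annihilated by every resonance of `θ = Δ / 2N`. By
Kronecker's theorem the multiples `k θ` then approach `v` modulo `ℤ^m`, so for some `k ≥ 1`
every `fract (k θ i)` lies in `(β, 1)`, contradicting the hypothesis on `Δ`.

Kronecker's theorem is proved by averaging the nonnegative trigonometric polynomial
`∏ i |∑_{j<r} 𝐞 (j x_i)|^(2m)` along `x = k θ - v`. Frequencies resonant with `θ` are resonant
with `v` and contribute a constant, the others average out; counting the zero frequencies shows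
that this constant exceeds the value of the polynomial at every point far from `ℤ^m`.
-/

open Finset Real FourierTransform

namespace Real

lemma fourierChar_intCast (z : ℤ) : 𝐞 (z : ℝ) = 1 := by
  rw [fourierChar_apply', Circle.exp_two_pi_mul_int]

lemma fourierChar_eq_one_iff {t : ℝ} : 𝐞 t = 1 ↔ ∃ z : ℤ, t = z := by
  rw [fourierChar_apply', Circle.exp_eq_one]
  refine exists_congr fun z => ?_
  constructor <;> intro h
  · nlinarith [pi_pos]
  · rw [h]; ring

lemma fourierChar_fract (t : ℝ) : 𝐞 (Int.fract t) = 𝐞 t := by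
  rw [Int.fract, sub_eq_add_neg, AddChar.map_add_eq_mul, ← Int.cast_neg, fourierChar_intCast,
    mul_one]

lemma norm_fourierChar_sub_one (t : ℝ) : ‖(𝐞 t : ℂ) - 1‖ = 2 * |sin (π * t)| := by
  rw [fourierChar_apply, mul_comm, Complex.norm_exp_I_mul_ofReal_sub_one, norm_mul,
    Real.norm_eq_abs, Real.norm_eq_abs, abs_two]
  ring_nf

lemma two_mul_le_sin_pi_mul {δ u : ℝ} (hδ : 0 ≤ δ) (h : u ∈ Set.Icc δ (1 - δ)) :
    2 * δ ≤ sin (π * u) := by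
  obtain ⟨h₁, h₂⟩ := h
  rcases le_total u (1 / 2) with hu | hu
  · have := le_sin_mul (x := 2 * u) (by linarith) (by linarith)
    rw [show π / 2 * (2 * u) = π * u by ring] at this
    linarith
  · have := le_sin_mul (x := 2 * (1 - u)) (by linarith) (by linarith)
    rw [show π / 2 * (2 * (1 - u)) = π - π * u by ring, sin_pi_sub] at this
    linarith

lemma four_mul_le_norm_fourierChar_sub_one {δ t : ℝ} (hδ : 0 ≤ δ)
    (h : Int.fract t ∈ Set.Icc δ (1 - δ)) :
    4 * δ ≤ ‖(𝐞 t : ℂ) - 1‖ := by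
  rw [← fourierChar_fract, norm_fourierChar_sub_one]
  have := two_mul_le_sin_pi_mul hδ h
  linarith [le_abs_self (sin (π * Int.fract t))]

lemma coe_fourierChar_add (a b : ℝ) : (𝐞 (a + b) : ℂ) = 𝐞 a * 𝐞 b := by
  rw [AddChar.map_add_eq_mul, Circle.coe_mul]

lemma coe_fourierChar_natCast_mul (k : ℕ) (t : ℝ) : (𝐞 (k * t) : ℂ) = (𝐞 t : ℂ) ^ k := by
  rw [← nsmul_eq_mul, AddChar.map_nsmul_eq_pow, Circle.coe_pow]

lemma coe_fourierChar_sum {α : Type*} (s : Finset α) (f : α → ℝ) :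
    (𝐞 (∑ i ∈ s, f i) : ℂ) = ∏ i ∈ s, (𝐞 (f i) : ℂ) := by
  classical
  induction s using Finset.induction_on with
  | empty => simp
  | insert a s ha ih => rw [sum_insert ha, prod_insert ha, coe_fourierChar_add, ih]

end Real

noncomputable def dirichletSum (r : ℕ) (t : ℝ) : ℂ := ∑ j ∈ range r, (𝐞 t : ℂ) ^ j

lemma norm_dirichletSum_le (r : ℕ) (t : ℝ) : ‖dirichletSum r t‖ ≤ r := by
  refine (norm_sum_le _ _).trans ?_
  simp [Circle.norm_coe]

lemma norm_dirichletSum_le_of_ne_one (r : ℕ) {t : ℝ} (h : 𝐞 t ≠ 1) :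
    ‖dirichletSum r t‖ ≤ 2 / ‖(𝐞 t : ℂ) - 1‖ := by
  have h' : (𝐞 t : ℂ) ≠ 1 := fun h₁ => h (Circle.ext h₁)
  rw [dirichletSum, geom_sum_eq h', norm_div]
  gcongr
  calc ‖(𝐞 t : ℂ) ^ r - 1‖ ≤ ‖(𝐞 t : ℂ) ^ r‖ + ‖(1 : ℂ)‖ := norm_sub_le _ _
    _ = 2 := by norm_num [Circle.norm_coe]

lemma norm_dirichletSum_sq_le {δ t : ℝ} (r : ℕ) (hδ : 0 < δ)
    (h : Int.fract t ∈ Set.Icc δ (1 - δ)) : ‖dirichletSum r t‖ ^ 2 ≤ (4 * δ ^ 2)⁻¹ := by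
  have hchord := four_mul_le_norm_fourierChar_sub_one hδ.le h
  have hne : 𝐞 t ≠ 1 := by
    intro h₁
    rw [h₁, Circle.coe_one, sub_self, norm_zero] at hchord
    linarith
  have hD : ‖dirichletSum r t‖ ≤ (2 * δ)⁻¹ :=
    calc ‖dirichletSum r t‖ ≤ 2 / ‖(𝐞 t : ℂ) - 1‖ := norm_dirichletSum_le_of_ne_one r hne
      _ ≤ 2 / (4 * δ) := by gcongr
      _ = (2 * δ)⁻¹ := by field_simp; ring
  calc ‖dirichletSum r t‖ ^ 2 ≤ ((2 * δ)⁻¹) ^ 2 := by gcongr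
    _ = (4 * δ ^ 2)⁻¹ := by ring

lemma dirichletSum_pow (r s : ℕ) (t : ℝ) :
    dirichletSum r t ^ s = ∑ f : Fin s → Fin r, (𝐞 ((∑ u, (f u : ℕ) : ℕ) * t) : ℂ) := by
  rw [dirichletSum, ← Fin.sum_univ_eq_sum_range, Fintype.sum_pow]
  refine Fintype.sum_congr _ _ fun f => ?_
  rw [coe_fourierChar_natCast_mul, prod_pow_eq_pow_sum]

lemma conj_dirichletSum (r : ℕ) (t : ℝ) :
    (starRingEnd ℂ) (dirichletSum r t) = dirichletSum r (-t) := by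
  simp only [dirichletSum, map_sum, map_pow, AddChar.map_neg_eq_inv, Circle.coe_inv_eq_conj]

def sumDiff {r s : ℕ} (p : (Fin s → Fin r) × (Fin s → Fin r)) : ℤ :=
  ∑ u, ((p.1 u : ℕ) : ℤ) - ∑ u, ((p.2 u : ℕ) : ℤ)

lemma norm_dirichletSum_sq_pow (r s : ℕ) (t : ℝ) :
    (((‖dirichletSum r t‖ ^ 2) ^ s : ℝ) : ℂ) =
      ∑ p : (Fin s → Fin r) × (Fin s → Fin r), (𝐞 (sumDiff p * t) : ℂ) := by
  push_cast
  rw [← Complex.mul_conj', conj_dirichletSum, mul_pow, dirichletSum_pow, dirichletSum_pow,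
    sum_mul_sum, ← Fintype.sum_prod_type']
  refine Fintype.sum_congr _ _ fun p => ?_
  rw [← coe_fourierChar_add, sumDiff]
  push_cast
  ring_nf

lemma sq_card_le_card_mul_card_filter_eq {α β : Type*} [Fintype α] [DecidableEq β]
    (f : α → β) (T : Finset β) (hf : ∀ x, f x ∈ T) :
    Fintype.card α ^ 2 ≤ #T * #{p : α × α | f p.1 = f p.2} := by
  have hfiber : ∀ b ∈ T, #{p : α × α | f p.1 = f p.2 ∧ f p.1 = b} = #{x | f x = b} ^ 2 := by
    intro b _
    rw [sq, ← card_product]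
    congr 1
    ext p
    simp only [mem_filter, mem_univ, true_and, mem_product]
    constructor
    · rintro ⟨h₁, h₂⟩; exact ⟨h₂, h₁ ▸ h₂⟩
    · rintro ⟨h₁, h₂⟩; exact ⟨h₁.trans h₂.symm, h₁⟩
  calc Fintype.card α ^ 2 = (∑ b ∈ T, #{x | f x = b}) ^ 2 := by
        rw [← card_univ, card_eq_sum_card_fiberwise fun x _ => hf x]
    _ ≤ #T * ∑ b ∈ T, #{x | f x = b} ^ 2 := sq_sum_le_card_mul_sum_sq
    _ = #T * #{p : α × α | f p.1 = f p.2} := by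
        rw [card_eq_sum_card_fiberwise (f := fun p : α × α => f p.1) (t := T)
          (fun p _ => hf p.1), sum_congr rfl fun b hb => (hfiber b hb).symm]
        simp only [filter_filter]

lemma pow_le_mul_card_filter_sum_eq (r : ℕ) {s : ℕ} (hs : 0 < s) :
    r ^ (2 * s) ≤ s * r *
      #{p : (Fin s → Fin r) × (Fin s → Fin r) | ∑ u, (p.1 u : ℕ) = ∑ u, (p.2 u : ℕ)} := by
  have hsum : ∀ f : Fin s → Fin r, ∑ u, (f u : ℕ) ∈ range (s * r) := by
    intro f
    have : Nonempty (Fin s) := ⟨⟨0, hs⟩⟩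
    rw [mem_range]
    calc ∑ u, (f u : ℕ) < ∑ _u : Fin s, r := sum_lt_sum_of_nonempty univ_nonempty fun u _ => (f u).2
      _ = s * r := by simp
  have := sq_card_le_card_mul_card_filter_eq _ _ hsum
  rwa [Fintype.card_fun, Fintype.card_fin, Fintype.card_fin, card_range, ← pow_mul,
    mul_comm s 2] at this

lemma sum_range_fourierChar_succ_mul_add (K : ℕ) (μ c : ℝ) :
    ∑ k ∈ range K, (𝐞 ((k + 1 : ℕ) * μ + c) : ℂ) = 𝐞 (μ + c) * dirichletSum K μ := by
  rw [dirichletSum, mul_sum]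
  refine sum_congr rfl fun k _ => ?_
  rw [← coe_fourierChar_natCast_mul, ← coe_fourierChar_add]
  push_cast
  ring_nf

lemma le_of_forall_nat_mul_sub_le {a C U : ℝ} (h : ∀ K : ℕ, a * K - C ≤ K * U) : a ≤ U := by
  by_contra! hlt
  obtain ⟨K, hK⟩ := exists_nat_gt (C / (a - U))
  rw [div_lt_iff₀ (sub_pos.2 hlt)] at hK
  linarith [h K]

open Classical in
lemma card_filter_le_of_forall_re_sum_le {α : Type*} [Fintype α] (μ ν : α → ℝ)
    (hres : ∀ τ, (∃ z : ℤ, μ τ = z) → ∃ z : ℤ, ν τ = z) {U : ℝ}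
    (hU : ∀ k : ℕ, 0 < k → (∑ τ, (𝐞 (k * μ τ - ν τ) : ℂ)).re ≤ U) :
    (#{τ | ∃ z : ℤ, μ τ = z} : ℝ) ≤ U := by
  set good : Finset α := {τ | ∃ z : ℤ, μ τ = z}
  set C : ℝ := ∑ τ ∈ univ.filter (· ∉ good), 2 / ‖(𝐞 (μ τ) : ℂ) - 1‖
  refine le_of_forall_nat_mul_sub_le (C := C) fun K => ?_
  set S : ℂ := ∑ τ, ∑ k ∈ range K, (𝐞 ((k + 1 : ℕ) * μ τ + -ν τ) : ℂ) with hS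
  have hgood : ∀ τ ∈ good, ∑ k ∈ range K, (𝐞 ((k + 1 : ℕ) * μ τ + -ν τ) : ℂ) = K := by
    intro τ hτ
    obtain ⟨z, hz⟩ := (mem_filter.1 hτ).2
    obtain ⟨z', hz'⟩ := hres τ ⟨z, hz⟩
    refine (sum_congr rfl fun k _ => ?_).trans (by rw [sum_const, card_range, nsmul_one])
    rw [hz, hz', show ((k + 1 : ℕ) : ℝ) * z + -z' = ((((k + 1 : ℕ) : ℤ) * z - z' : ℤ) : ℝ) by
      push_cast; ring, fourierChar_intCast, Circle.coe_one]
  have hbad : ‖∑ τ ∈ univ.filter (· ∉ good),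
      ∑ k ∈ range K, (𝐞 ((k + 1 : ℕ) * μ τ + -ν τ) : ℂ)‖ ≤ C := by
    refine (norm_sum_le _ _).trans (sum_le_sum fun τ hτ => ?_)
    have hne : 𝐞 (μ τ) ≠ 1 := fun h =>
      (mem_filter.1 hτ).2 (mem_filter.2 ⟨mem_univ _, fourierChar_eq_one_iff.1 h⟩)
    rw [sum_range_fourierChar_succ_mul_add, norm_mul, Circle.norm_coe, one_mul]
    exact norm_dirichletSum_le_of_ne_one K hne
  have hlower : (#good : ℝ) * K - C ≤ S.re := by
    rw [hS, ← sum_filter_add_sum_filter_not univ (· ∈ good), filter_mem_eq_inter, univ_inter,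
      sum_congr rfl hgood, sum_const, Complex.add_re]
    simp only [nsmul_eq_mul, Complex.mul_re, Complex.natCast_re, Complex.natCast_im, zero_mul,
      sub_zero]
    linarith [neg_le_of_abs_le ((Complex.abs_re_le_norm _).trans hbad)]
  have hupper : S.re ≤ K * U := by
    rw [hS, sum_comm, Complex.re_sum]
    calc ∑ k ∈ range K, (∑ τ, (𝐞 ((k + 1 : ℕ) * μ τ + -ν τ) : ℂ)).re
        ≤ ∑ _k ∈ range K, U := sum_le_sum fun k _ => by
          simpa only [← sub_eq_add_neg] using hU (k + 1) k.succ_pos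
      _ = K * U := by simp
  linarith

section

variable {ι : Type*} [Fintype ι]

lemma prod_norm_dirichletSum_sq_pow [DecidableEq ι] (r s : ℕ) (x : ι → ℝ) :
    ((∏ i, (‖dirichletSum r (x i)‖ ^ 2) ^ s : ℝ) : ℂ) =
      ∑ τ : ι → (Fin s → Fin r) × (Fin s → Fin r), (𝐞 (∑ i, sumDiff (τ i) * x i) : ℂ) := by
  push_cast
  simp_rw [← Complex.ofReal_pow, norm_dirichletSum_sq_pow, Fintype.prod_sum, coe_fourierChar_sum]

lemma prod_norm_dirichletSum_sq_pow_le [DecidableEq ι] (r s : ℕ) {δ : ℝ}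
    (hδ : 0 < δ) {x : ι → ℝ} {i₀ : ι} (h : Int.fract (x i₀) ∈ Set.Icc δ (1 - δ)) :
    ∏ i, (‖dirichletSum r (x i)‖ ^ 2) ^ s ≤
      ((4 * δ ^ 2)⁻¹) ^ s * (((r : ℝ) ^ 2) ^ s) ^ (Fintype.card ι - 1) := by
  rw [← mul_prod_erase univ _ (mem_univ i₀)]
  refine mul_le_mul (pow_le_pow_left₀ (by positivity) (norm_dirichletSum_sq_le r hδ h) s) ?_
    (prod_nonneg fun _ _ => by positivity) (by positivity)
  calc ∏ i ∈ univ.erase i₀, (‖dirichletSum r (x i)‖ ^ 2) ^ s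
      ≤ ∏ _i ∈ univ.erase i₀, ((r : ℝ) ^ 2) ^ s :=
        prod_le_prod (fun _ _ => by positivity) fun i _ =>
          pow_le_pow_left₀ (by positivity)
            (pow_le_pow_left₀ (norm_nonneg _) (norm_dirichletSum_le r _) 2) s
    _ = (((r : ℝ) ^ 2) ^ s) ^ (Fintype.card ι - 1) := by
        rw [prod_const, card_erase_of_mem (mem_univ _), card_univ]

-- the terms of `prod_norm_dirichletSum_sq_pow` whose frequency vector is resonant with `θ`
open Classical in
noncomputable def resonantFreqs [DecidableEq ι] (r s : ℕ) (θ : ι → ℝ) :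
    Finset (ι → (Fin s → Fin r) × (Fin s → Fin r)) :=
  {τ | ∃ z : ℤ, ∑ i, (sumDiff (τ i) : ℝ) * θ i = z}

lemma card_resonantFreqs_le [DecidableEq ι] {θ v : ι → ℝ}
    (hres : ∀ b : ι → ℤ, (∃ z : ℤ, ∑ i, b i * θ i = z) → ∃ z : ℤ, ∑ i, b i * v i = z)
    {δ : ℝ} (hδ : 0 < δ)
    (hfar : ∀ k : ℕ, 0 < k → ∃ i, Int.fract (k * θ i - v i) ∈ Set.Icc δ (1 - δ))
    (r s : ℕ) :
    (#(resonantFreqs r s θ) : ℝ) ≤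
      ((4 * δ ^ 2)⁻¹) ^ s * (((r : ℝ) ^ 2) ^ s) ^ (Fintype.card ι - 1) := by
  refine card_filter_le_of_forall_re_sum_le (α := ι → (Fin s → Fin r) × (Fin s → Fin r))
    (fun τ => ∑ i, (sumDiff (τ i) : ℝ) * θ i)
    (fun τ => ∑ i, (sumDiff (τ i) : ℝ) * v i) (fun τ => hres fun i => sumDiff (τ i))
    fun k hk => ?_
  obtain ⟨i₀, hi₀⟩ := hfar k hk
  have hphase : ∀ τ : ι → (Fin s → Fin r) × (Fin s → Fin r),
      (k : ℝ) * ∑ i, (sumDiff (τ i) : ℝ) * θ i - ∑ i, (sumDiff (τ i) : ℝ) * v i =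
        ∑ i, (sumDiff (τ i) : ℝ) * (k * θ i - v i) := fun τ => by
    rw [mul_sum, ← sum_sub_distrib]
    exact sum_congr rfl fun i _ => by ring
  simp_rw [hphase, ← prod_norm_dirichletSum_sq_pow, Complex.ofReal_re]
  exact prod_norm_dirichletSum_sq_pow_le r s hδ hi₀

lemma pow_card_filter_sum_eq_le_card_resonantFreqs [DecidableEq ι] (r s : ℕ)
    (θ : ι → ℝ) :
    #{p : (Fin s → Fin r) × (Fin s → Fin r) | ∑ u, (p.1 u : ℕ) = ∑ u, (p.2 u : ℕ)} ^
      Fintype.card ι ≤ #(resonantFreqs r s θ) := by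
  classical
  set Q : Finset ((Fin s → Fin r) × (Fin s → Fin r)) :=
    {p | ∑ u, (p.1 u : ℕ) = ∑ u, (p.2 u : ℕ)}
  have hsub : Fintype.piFinset (fun _ : ι => Q) ⊆ resonantFreqs r s θ := by
    intro τ hτ
    have hzero : ∀ i, sumDiff (τ i) = 0 := fun i => by
      rw [sumDiff, sub_eq_zero]
      exact_mod_cast (mem_filter.1 (Fintype.mem_piFinset.1 hτ i)).2
    exact mem_filter.2 ⟨mem_univ _, 0, by simp [hzero]⟩
  simpa only [Fintype.card_piFinset, prod_const, card_univ] using card_le_card hsub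

theorem exists_pos_nat_fract_mul_sub_notMem_Icc (θ v : ι → ℝ)
    (hres : ∀ b : ι → ℤ, (∃ z : ℤ, ∑ i, b i * θ i = z) → ∃ z : ℤ, ∑ i, b i * v i = z)
    {δ : ℝ} (hδ : 0 < δ) :
    ∃ k : ℕ, 0 < k ∧ ∀ i, Int.fract (k * θ i - v i) ∉ Set.Icc δ (1 - δ) := by
  classical
  by_contra! hfar
  obtain ⟨i₀, -⟩ := hfar 1 one_pos
  set m := Fintype.card ι
  have hm : 0 < m := Fintype.card_pos_iff.2 ⟨i₀⟩
  set c : ℝ := 4 * δ ^ 2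
  have hc : 0 < c := by positivity
  obtain ⟨r, hr⟩ := exists_nat_gt (m / c)
  have hr₀ : (0 : ℝ) < r := (div_pos (by exact_mod_cast hm) hc).trans hr
  set Q : Finset ((Fin m → Fin r) × (Fin m → Fin r)) :=
    {p | ∑ u, (p.1 u : ℕ) = ∑ u, (p.2 u : ℕ)}
  have hcount : ((r : ℝ) ^ 2) ^ m ≤ m * r * #Q := by
    rw [← pow_mul]
    exact_mod_cast pow_le_mul_card_filter_sum_eq r hm
  have hQres : (#Q : ℝ) ^ m ≤ #(resonantFreqs r m θ) := by
    exact_mod_cast pow_card_filter_sum_eq_le_card_resonantFreqs r m θ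
  have hresonant := hQres.trans (card_resonantFreqs_le hres hδ hfar r m)
  have hpow : ((r : ℝ) ^ 2) ^ m ≤ ((m : ℝ) * r * c⁻¹) ^ m := by
    refine le_of_mul_le_mul_right ?_ (by positivity : (0 : ℝ) < (((r : ℝ) ^ 2) ^ m) ^ (m - 1))
    calc ((r : ℝ) ^ 2) ^ m * (((r : ℝ) ^ 2) ^ m) ^ (m - 1) = (((r : ℝ) ^ 2) ^ m) ^ m :=
          mul_pow_sub_one hm.ne' _
      _ ≤ ((m : ℝ) * r * #Q) ^ m := pow_le_pow_left₀ (by positivity) hcount m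
      _ ≤ ((m : ℝ) * r) ^ m * ((c⁻¹) ^ m * (((r : ℝ) ^ 2) ^ m) ^ (m - 1)) := by
          rw [mul_pow]; gcongr
      _ = ((m : ℝ) * r * c⁻¹) ^ m * (((r : ℝ) ^ 2) ^ m) ^ (m - 1) := by ring
  have hsq := (pow_le_pow_iff_left₀ (by positivity) (by positivity) hm.ne').1 hpow
  have hrc : r * c ≤ m := by
    rw [← mul_le_mul_iff_of_pos_left hr₀]
    calc ↑r * (↑r * c) = r ^ 2 * c := by ring
      _ ≤ m * r * c⁻¹ * c := by gcongr
      _ = r * m := by field_simp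
  rw [div_lt_iff₀ hc] at hr
  linarith

lemma exists_sum_mul_eq_zero_of_pos_of_neg (a : ι → ℝ)
    (hp : ∃ i, 0 < a i) (hn : ∃ i, a i < 0) :
    ∃ ε > 0, ∃ w : ι → ℝ, (∀ i, w i ∈ Set.Icc ε (1 - ε)) ∧ ∑ i, a i * w i = 0 := by
  obtain ⟨p, hp⟩ := hp
  obtain ⟨q, hq⟩ := hn
  set P := ∑ i, max (a i) 0
  set M := ∑ i, max (-a i) 0
  have hP : 0 < P := hp.trans_le <| (le_max_left _ _).trans <|
    single_le_sum (f := fun i => max (a i) 0) (fun _ _ => le_max_right _ _) (mem_univ p)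
  have hM : 0 < M := (neg_pos.2 hq).trans_le <| (le_max_left _ _).trans <|
    single_le_sum (f := fun i => max (-a i) 0) (fun _ _ => le_max_right _ _) (mem_univ q)
  -- weight `M` on the nonnegative coordinates and `P` on the negative ones balances `a`
  set w : ι → ℝ := fun i => if 0 ≤ a i then M / (P + M) else P / (P + M) with hw
  refine ⟨min P M / (P + M), by positivity, w, fun i => ?_, ?_⟩
  · have hPM : 0 < P + M := by positivity
    have h₁ : min P M / (P + M) ≤ M / (P + M) := by gcongr; exact min_le_right _ _
    have h₂ : min P M / (P + M) ≤ P / (P + M) := by gcongr; exact min_le_left _ _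
    have hsum : P / (P + M) + M / (P + M) = 1 := by field_simp
    simp only [hw]
    split_ifs <;> constructor <;> linarith
  · have hterm : ∀ i, a i * w i * (P + M) =
        M * max (a i) 0 - P * max (-a i) 0 := fun i => by
      simp only [hw]
      split_ifs with h
      · rw [max_eq_left h, max_eq_right (by linarith)]; field_simp; ring
      · rw [max_eq_right (by linarith), max_eq_left (by linarith)]; field_simp; ring
    have htot : (∑ i, a i * w i) * (P + M) = 0 := by
      rw [sum_mul, sum_congr rfl fun i _ => hterm i, sum_sub_distrib, ← mul_sum, ← mul_sum]
      ring
    exact (mul_eq_zero.1 htot).resolve_right (by positivity)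

end

lemma Int.fract_add_eq_of_lt_one {R : Type*} [Ring R] [LinearOrder R] [IsOrderedRing R]
    [FloorRing R] {x y : R} (h₀ : 0 ≤ Int.fract x + y) (h₁ : Int.fract x + y < 1) :
    Int.fract (x + y) = Int.fract x + y :=
  Int.fract_eq_iff.2 ⟨h₀, h₁, ⌊x⌋, by rw [Int.fract]; abel⟩

theorem stmt_1_general (n N m : ℕ) (hN : n + 1 ≤ N)
    (Δ : Fin m → ℝ)
    (h : ∀ k : ℕ, 0 < k →
      ∃ i : Fin m, Int.fract ((k : ℝ) * Δ i / (2 * N)) ∈ Set.Icc 0 ((n : ℝ) / N))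
    (a₀ : Fin m → ℤ)
    (hR : {a : Fin m → ℤ | ∃ z : ℤ, ∑ i, (a i : ℝ) * Δ i = 2 * N * z}
        = {a : Fin m → ℤ | ∃ c : ℤ, a = c • a₀})
    (hpos : ∃ i, 0 < a₀ i) :
    ∀ i, 0 ≤ a₀ i := by
  by_contra! hneg
  obtain ⟨ε, hε, w, hw, hw₀⟩ := exists_sum_mul_eq_zero_of_pos_of_neg (fun i => (a₀ i : ℝ))
    (by exact_mod_cast hpos) (by exact_mod_cast hneg)
  have hN₀ : (0 : ℝ) < N := by exact_mod_cast (by omega : 0 < N)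
  set β : ℝ := n / N
  have hβ : β < 1 := (div_lt_one hN₀).2 (by exact_mod_cast (by omega : n < N))
  -- `v := -(1 - β) w` satisfies every resonance of `θ := Δ / 2N`, since those are multiples of `a₀`
  have hres : ∀ b : Fin m → ℤ, (∃ z : ℤ, ∑ i, b i * (Δ i / (2 * N)) = z) →
      ∃ z : ℤ, ∑ i, b i * -((1 - β) * w i) = z := by
    rintro b ⟨z, hz⟩
    have hb : b ∈ {a : Fin m → ℤ | ∃ z : ℤ, ∑ i, (a i : ℝ) * Δ i = 2 * N * z} := ⟨z, by
      rw [← hz, mul_sum]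
      exact sum_congr rfl fun i _ => by field_simp⟩
    obtain ⟨c, rfl⟩ := hR ▸ hb
    refine ⟨0, ?_⟩
    simp only [Pi.smul_apply, smul_eq_mul, Int.cast_mul, Int.cast_zero]
    rw [← neg_eq_zero, ← sum_neg_distrib, ← mul_zero ((1 - β) * c), ← hw₀, mul_sum]
    exact sum_congr rfl fun i _ => by ring
  have hδ : 0 < (1 - β) * ε := mul_pos (sub_pos.2 hβ) hε
  obtain ⟨k, hk, hfar⟩ := exists_pos_nat_fract_mul_sub_notMem_Icc _ _ hres hδ
  obtain ⟨i, hi₀, hi₁⟩ := h k hk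
  obtain ⟨hw₁, hw₂⟩ := hw i
  apply hfar i
  rw [← mul_div_assoc, sub_neg_eq_add, Int.fract_add_eq_of_lt_one (by nlinarith) (by nlinarith)]
  constructor <;> nlinarith

/-- Sign part of Theorem 1.1(ii): if the group of resonances of `Δ` modulo `2N`
is generated by a single vector `a₀` with at least one strictly positive
component, then all components of `a₀` are non-negative. -/
theorem stmt_1 (n N m : ℕ) (hn : 0 < n) (hN : n + 1 ≤ N) (hm : 0 < m)
    (Δ : Fin m → ℝ)
    (h : ∀ k : ℕ, 0 < k →
      ∃ i : Fin m, Int.fract ((k : ℝ) * Δ i / (2 * N)) ∈ Set.Icc 0 ((n : ℝ) / N))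
    (a₀ : Fin m → ℤ)
    (hR : {a : Fin m → ℤ | ∃ z : ℤ, ∑ i, (a i : ℝ) * Δ i = 2 * N * z}
        = {a : Fin m → ℤ | ∃ c : ℤ, a = c • a₀})
    (hpos : ∃ i, 0 < a₀ i) :
    ∀ i, 0 ≤ a₀ i :=
  stmt_1_general n N m hN Δ h a₀ hR hpos
end

section
/- Let n, N, m be positive integers with n + 1 ≤ N, and let Δ ∈ ℝ^m be such that for every positive integer k there exists an index i with Int.fract(k·Δ_i/(2N)) ∈ [0, n/N]. Let R = {a ∈ ℤ^m : a_1·Δ_1 + … + a_m·Δ_m ∈ 2N·ℤ} and suppose R = ℤ·a₀ for some a₀ ∈ ℤ^m with at least one strictly positive component. Then the sum of the components satisfies ∑_{i=1}^m (a₀)_i ≤ N/(N − n). -/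
/-!
Put `θ = Δ / (2N)` and `S = ∑ (a₀)_i`. Since every integer relation `b · θ ∈ ℤ` is a multiple
of `a₀`, it also satisfies `b · φ ∈ ℤ` for `φ = (1/S, …, 1/S)`; by Kronecker's theorem some
`t ≥ 1` then puts every `t θ_i` close to `-1/S` modulo `1`. If `S > N/(N-n)`, the point
`1 - 1/S` lies outside `[0, n/N]` with room to spare, contradicting the hypothesis on `Δ`.

The Kronecker step is proved à la Bohr: with `F t = ∏ i, (1 + cos 2π(t θ_i + φ_i))`, the power
`F t ^ p` is a trigonometric polynomial in `t` with nonnegative coefficients. Its mean over `t ≥ 1`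
keeps exactly the resonant frequencies, whose phases are integral, so it is at least the constant
coefficient `2^{-pm} C(2p,p)^m`. As `C(2p,p) ≥ 4^p / (2p)`, this rules out `F ≤ 2^m ρ` for a fixed
`ρ < 1` once `p` is large.
-/

open Finset Real Filter Topology

theorem ofReal_one_add_cos_pow (x : ℝ) (p : ℕ) :
    ((1 + cos x : ℝ) : ℂ) ^ p = (1 / 2) ^ p * ∑ j ∈ range (2 * p + 1),
      ((2 * p).choose j : ℂ) * Complex.exp ((((j : ℝ) - p) * x : ℝ) * Complex.I) := by
  have hcos : ((1 + cos x : ℝ) : ℂ) =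
      1 / 2 * (Complex.exp (x * Complex.I))⁻¹ * (Complex.exp (x * Complex.I) + 1) ^ 2 := by
    rw [Complex.ofReal_add, Complex.ofReal_cos, Complex.cos, neg_mul, Complex.exp_neg]
    field_simp
    push_cast
    ring
  rw [hcos, mul_pow, mul_pow, ← pow_mul, add_pow, mul_assoc, mul_sum]
  congr 1
  refine sum_congr rfl fun j _ => ?_
  rw [one_pow, mul_one, inv_pow, ← Complex.exp_nat_mul, ← Complex.exp_nat_mul, ← Complex.exp_neg,
    ← mul_assoc, ← Complex.exp_add, mul_comm]
  push_cast
  ring_nf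

theorem prod_one_add_cos_pow {ι : Type*} [Fintype ι] [DecidableEq ι] (x : ι → ℝ) (p : ℕ) :
    (∏ i, (1 + cos (x i))) ^ p = (1 / 2) ^ (p * Fintype.card ι) *
      ∑ k ∈ Fintype.piFinset fun _ => range (2 * p + 1),
        (∏ i, ((2 * p).choose (k i) : ℝ)) * cos (∑ i, ((k i : ℝ) - p) * x i) := by
  have hC : (((∏ i, (1 + cos (x i))) ^ p : ℝ) : ℂ) =
      (((1 / 2) ^ (p * Fintype.card ι) : ℝ) : ℂ) *
        ∑ k ∈ Fintype.piFinset fun _ => range (2 * p + 1),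
          ((∏ i, ((2 * p).choose (k i) : ℝ) : ℝ) : ℂ) *
            Complex.exp ((∑ i, ((k i : ℝ) - p) * x i : ℝ) * Complex.I) := by
    simp_rw [Complex.ofReal_pow, Complex.ofReal_prod, ← prod_pow, ofReal_one_add_cos_pow,
      prod_mul_distrib, prod_const, card_univ, prod_univ_sum, Complex.ofReal_sum, sum_mul,
      Complex.exp_sum, ← prod_mul_distrib]
    push_cast
    rw [← pow_mul, mul_comm p]
  rw [← Complex.ofReal_re ((∏ i, (1 + cos (x i))) ^ p), hC, Complex.re_ofReal_mul, Complex.re_sum]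
  simp_rw [Complex.re_ofReal_mul, Complex.exp_ofReal_mul_I_re]

theorem abs_sin_mul_sum_range_cos_le_one (β γ : ℝ) (T : ℕ) :
    |sin (π * β) * ∑ t ∈ range T, cos (2 * π * (t * β + γ))| ≤ 1 := by
  set f : ℕ → ℝ := fun t => sin (2 * π * (t * β + γ) - π * β)
  have htel : 2 * (sin (π * β) * ∑ t ∈ range T, cos (2 * π * (t * β + γ))) = f T - f 0 := by
    rw [← sum_range_sub, mul_sum, mul_sum]
    refine sum_congr rfl fun t _ => ?_
    rw [← mul_assoc, two_mul_sin_mul_cos, ← neg_sub, sin_neg]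
    simp only [f]
    push_cast
    ring_nf
  have := abs_sub (f T) (f 0)
  rw [← htel, abs_mul, abs_two] at this
  have hf : ∀ t, |f t| ≤ 1 := fun t => abs_sin_le_one _
  linarith [hf T, hf 0]

theorem abs_mul_sum_range_cos_le {β : ℝ} (hβ : ∀ c : ℤ, β ≠ c) (w γ : ℝ) (T : ℕ) :
    |w * ∑ t ∈ range T, cos (2 * π * (t * β + γ))| ≤ |w| / |sin (π * β)| := by
  have hsin : 0 < |sin (π * β)| := by
    refine abs_pos.2 fun h => ?_
    obtain ⟨c, hc⟩ := sin_eq_zero_iff.1 h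
    exact hβ c (by nlinarith [pi_pos])
  rw [le_div_iff₀ hsin, abs_mul, mul_assoc, ← abs_mul, mul_comm _ (sin _)]
  exact mul_le_of_le_one_right (abs_nonneg w) (abs_sin_mul_sum_range_cos_le_one β γ T)

open Classical in
theorem sum_filter_le_of_forall_sum_cos_le {ι : Type*} (P : Finset ι) (W β γ : ι → ℝ)
    (hres : ∀ k ∈ P, ∀ c : ℤ, β k = c → ∃ d : ℤ, γ k = d) (M : ℝ)
    (hM : ∀ t : ℕ, 0 < t → ∑ k ∈ P, W k * cos (2 * π * (t * β k + γ k)) ≤ M) :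
    ∑ k ∈ P with ∃ c : ℤ, β k = c, W k ≤ M := by
  set A := ∑ k ∈ P with ∃ c : ℤ, β k = c, W k
  set C := ∑ k ∈ P with ¬∃ c : ℤ, β k = c, |W k| / |sin (π * β k)|
  set S : ι → ℕ → ℝ := fun k T => ∑ t ∈ range T, cos (2 * π * (t * β k + (β k + γ k)))
  have hlow : ∀ T : ℕ, A * T - C ≤ ∑ k ∈ P, W k * S k T := by
    intro T
    rw [← sum_filter_add_sum_filter_not P (fun k => ∃ c : ℤ, β k = c), sum_mul, sub_eq_add_neg,
      ← sum_neg_distrib]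
    refine add_le_add (le_of_eq (sum_congr rfl fun k hk => ?_)) (sum_le_sum fun k hk => ?_)
    · obtain ⟨hkP, c, hc⟩ := mem_filter.1 hk
      obtain ⟨d, hd⟩ := hres k hkP c hc
      have hterm : ∀ t : ℕ, cos (2 * π * (t * β k + (β k + γ k))) = 1 := fun t => by
        rw [hc, hd, ← cos_int_mul_two_pi ((t + 1) * c + d)]
        push_cast
        ring_nf
      simp [S, hterm]
    · obtain ⟨-, hk⟩ := mem_filter.1 hk
      exact neg_le_of_abs_le (abs_mul_sum_range_cos_le (not_exists.1 hk) _ _ T)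
  have hup : ∀ T : ℕ, ∑ k ∈ P, W k * S k T ≤ M * T := by
    intro T
    simp only [S, mul_sum]
    rw [sum_comm]
    calc ∑ t ∈ range T, ∑ k ∈ P, W k * cos (2 * π * (t * β k + (β k + γ k)))
        ≤ ∑ _t ∈ range T, M := sum_le_sum fun t _ => le_of_eq_of_le (by push_cast; ring_nf)
          (hM (t + 1) t.succ_pos)
      _ = M * T := by simp [mul_comm]
  by_contra! hMA
  obtain ⟨T, hT⟩ := exists_nat_gt (C / (A - M))
  rw [div_lt_iff₀ (sub_pos.2 hMA)] at hT
  linarith [hlow T, hup T]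

theorem centralBinom_pow_le_of_forall_prod_le {ι : Type*} [Fintype ι] (θ φ : ι → ℝ)
    (hres : ∀ b : ι → ℤ, ∀ c : ℤ, ∑ i, b i * θ i = c → ∃ d : ℤ, ∑ i, b i * φ i = d)
    {Q : ℝ} (hQ : ∀ t : ℕ, 0 < t → ∏ i, (1 + cos (2 * π * (t * θ i + φ i))) ≤ Q) (p : ℕ) :
    (p.centralBinom : ℝ) ^ Fintype.card ι ≤ 2 ^ (p * Fintype.card ι) * Q ^ p := by
  classical
  set m := Fintype.card ι
  set K := Fintype.piFinset fun _ : ι => range (2 * p + 1)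
  set W : (ι → ℕ) → ℝ := fun k => (1 / 2) ^ (p * m) * ∏ i, ((2 * p).choose (k i) : ℝ)
  set β : (ι → ℕ) → ℝ := fun k => ∑ i, ((k i : ℝ) - p) * θ i
  set γ : (ι → ℕ) → ℝ := fun k => ∑ i, ((k i : ℝ) - p) * φ i
  have hexp : ∀ t : ℕ, (∏ i, (1 + cos (2 * π * (t * θ i + φ i)))) ^ p
      = ∑ k ∈ K, W k * cos (2 * π * (t * β k + γ k)) := by
    intro t
    rw [prod_one_add_cos_pow, mul_sum]
    refine sum_congr rfl fun k _ => ?_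
    simp only [W, β, γ, mul_sum, ← sum_add_distrib, mul_assoc]
    congr 3
    exact sum_congr rfl fun i _ => by ring
  have hresK : ∀ k ∈ K, ∀ c : ℤ, β k = c → ∃ d : ℤ, γ k = d := fun k _ c hc => by
    simpa [γ] using hres (fun i => k i - p) c (by simpa [β] using hc)
  have hmean := sum_filter_le_of_forall_sum_cos_le K W β γ hresK (Q ^ p) fun t ht =>
    hexp t ▸ pow_le_pow_left₀
      (prod_nonneg fun i _ => by linarith [neg_one_le_cos (2 * π * (t * θ i + φ i))]) (hQ t ht) p
  have hcenter : (fun _ => p) ∈ {k ∈ K | ∃ c : ℤ, β k = c} := by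
    simp only [K, β, mem_filter, Fintype.mem_piFinset, mem_range, sub_self, zero_mul,
      sum_const_zero]
    exact ⟨fun _ => by omega, 0, Int.cast_zero.symm⟩
  have hW := (single_le_sum (f := W) (fun k _ => by positivity) hcenter).trans hmean
  simp only [W, prod_const, card_univ] at hW
  rw [Nat.centralBinom_eq_two_mul_choose]
  calc ((2 * p).choose p : ℝ) ^ m
      = 2 ^ (p * m) * ((1 / 2) ^ (p * m) * ((2 * p).choose p : ℝ) ^ m) := by
        rw [← mul_assoc, ← mul_pow]; norm_num
    _ ≤ 2 ^ (p * m) * Q ^ p := by gcongr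

theorem exists_forall_lt_cos {ι : Type*} [Fintype ι] (θ φ : ι → ℝ)
    (hres : ∀ b : ι → ℤ, ∀ c : ℤ, ∑ i, b i * θ i = c → ∃ d : ℤ, ∑ i, b i * φ i = d)
    {c : ℝ} (hc : c < 1) : ∃ t : ℕ, 0 < t ∧ ∀ i, c < cos (2 * π * (t * θ i + φ i)) := by
  classical
  by_contra! H
  set m := Fintype.card ι
  set ρ := (1 + c) / 2 with hρ
  have hρ0 : 0 ≤ ρ := by
    obtain ⟨i, hi⟩ := H 1 one_pos
    linarith [neg_one_le_cos (2 * π * ((1 : ℕ) * θ i + φ i))]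
  have hprod : ∀ t : ℕ, 0 < t → ∏ i, (1 + cos (2 * π * (t * θ i + φ i))) ≤ 2 ^ m * ρ := by
    intro t ht
    obtain ⟨i, hi⟩ := H t ht
    calc ∏ j, (1 + cos (2 * π * (t * θ j + φ j))) ≤ ∏ j, 2 * if j = i then ρ else 1 := by
          refine prod_le_prod (fun j _ => by linarith [neg_one_le_cos (2 * π * (t * θ j + φ j))])
            fun j _ => ?_
          split_ifs with hj
          · subst hj; linarith
          · linarith [cos_le_one (2 * π * (t * θ j + φ j))]
      _ = 2 ^ m * ρ := by rw [prod_mul_distrib, prod_const, prod_ite_eq']; simp [m]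
  have hbound : ∀ p : ℕ, 0 < p → 1 ≤ (2 * p : ℝ) ^ m * ρ ^ p := by
    intro p hp
    have hcb : (4 : ℝ) ^ p ≤ 2 * p * p.centralBinom := by
      exact_mod_cast Nat.four_pow_le_two_mul_self_mul_centralBinom p hp
    refine le_of_mul_le_mul_left ?_ (by positivity : (0 : ℝ) < 4 ^ (p * m))
    calc (4 : ℝ) ^ (p * m) * 1 = ((4 : ℝ) ^ p) ^ m := by rw [mul_one, pow_mul]
      _ ≤ (2 * p : ℝ) ^ m * (p.centralBinom : ℝ) ^ m := by rw [← mul_pow]; gcongr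
      _ ≤ (2 * p : ℝ) ^ m * (2 ^ (p * m) * (2 ^ m * ρ) ^ p) := by
          gcongr; exact centralBinom_pow_le_of_forall_prod_le θ φ hres hprod p
      _ = 4 ^ (p * m) * ((2 * p : ℝ) ^ m * ρ ^ p) := by
          rw [show (4 : ℝ) ^ (p * m) = 2 ^ (p * m) * 2 ^ (p * m) by rw [← mul_pow]; norm_num]
          ring_nf
  have hlim : Tendsto (fun p : ℕ => (2 * p : ℝ) ^ m * ρ ^ p) atTop (𝓝 0) := by
    simpa [mul_pow, mul_assoc] using
      (tendsto_pow_const_mul_const_pow_of_lt_one m hρ0 (by linarith)).const_mul ((2 : ℝ) ^ m)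
  obtain ⟨p, hp, hp0⟩ := ((hlim.eventually_lt_const one_pos).and (eventually_gt_atTop 0)).exists
  linarith [hbound p hp0]

theorem cos_two_pi_mul_le_of_mem_Icc {η v : ℝ} (hη : 0 ≤ η) (hv : v ∈ Set.Icc η (1 - η)) :
    cos (2 * π * v) ≤ cos (2 * π * η) := by
  obtain ⟨hηv, hv1⟩ := hv
  rcases le_total v (1 / 2) with hv2 | hv2
  · exact cos_le_cos_of_nonneg_of_le_pi (by positivity) (by nlinarith [pi_pos])
      (by nlinarith [pi_pos])
  · rw [← cos_neg, show -(2 * π * v) = 2 * π * (1 - v) + ((-1 : ℤ) : ℝ) * (2 * π) by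
      push_cast; ring, cos_add_int_mul_two_pi]
    exact cos_le_cos_of_nonneg_of_le_pi (by positivity) (by nlinarith [pi_pos])
      (by nlinarith [pi_pos])

theorem cos_two_pi_mul_fract_add (x y : ℝ) :
    cos (2 * π * (Int.fract x + y)) = cos (2 * π * (x + y)) := by
  rw [← cos_add_int_mul_two_pi _ ⌊x⌋, Int.fract]
  ring_nf

theorem sum_mul_one_sub_le_one_of_forall_exists_fract_le {ι : Type*} [Fintype ι] (θ : ι → ℝ)
    (a₀ : ι → ℤ) {x : ℝ} (hx : x ≤ 1) (h : ∀ t : ℕ, 0 < t → ∃ i, Int.fract (t * θ i) ≤ x)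
    (hR : ∀ b : ι → ℤ, ∀ c : ℤ, ∑ i, b i * θ i = c → ∃ d : ℤ, b = d • a₀) :
    (∑ i, (a₀ i : ℝ)) * (1 - x) ≤ 1 := by
  set S := ∑ i, (a₀ i : ℝ)
  by_contra! hS
  have hx0 : 0 ≤ x := by
    obtain ⟨i, hi⟩ := h 1 one_pos
    exact (Int.fract_nonneg _).trans hi
  have hS0 : 0 < S := pos_of_mul_pos_left (one_pos.trans hS) (by linarith)
  have hgap : x + 1 / S < 1 := by
    rw [← sub_pos, show 1 - (x + 1 / S) = (S * (1 - x) - 1) / S by field_simp; ring]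
    exact div_pos (by linarith) hS0
  set η := min (1 / S) (1 - x - 1 / S)
  have hη0 : 0 < η := lt_min (by positivity) (by linarith)
  have hηS : η ≤ 1 / S := min_le_left _ _
  have hηgap : η ≤ 1 - x - 1 / S := min_le_right _ _
  have hres : ∀ b : ι → ℤ, ∀ c : ℤ, ∑ i, b i * θ i = c → ∃ d : ℤ, ∑ i, b i * (1 / S) = d := by
    intro b c hb
    obtain ⟨d, rfl⟩ := hR b c hb
    refine ⟨d, ?_⟩
    simp only [Pi.smul_apply, smul_eq_mul, Int.cast_mul, ← sum_mul, ← mul_sum]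
    rw [mul_one_div, mul_div_assoc, div_self hS0.ne', mul_one]
  have hcosη : cos (2 * π * η) < 1 := by
    simpa using cos_lt_cos_of_nonneg_of_le_pi le_rfl (by nlinarith [pi_pos])
      (by positivity : 0 < 2 * π * η)
  obtain ⟨t, ht, hcos⟩ := exists_forall_lt_cos θ _ hres hcosη
  obtain ⟨i, hi⟩ := h t ht
  refine (hcos i).not_ge (cos_two_pi_mul_fract_add (t * θ i) (1 / S) ▸
    cos_two_pi_mul_le_of_mem_Icc hη0.le ⟨?_, ?_⟩)
  · linarith [Int.fract_nonneg ((t : ℝ) * θ i)]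
  · linarith

theorem stmt_2_general (n N m : ℕ) (hN : n + 1 ≤ N)
    (Δ : Fin m → ℝ)
    (h : ∀ k : ℕ, 0 < k →
      ∃ i : Fin m, Int.fract ((k : ℝ) * Δ i / (2 * N)) ∈ Set.Icc 0 ((n : ℝ) / N))
    (a₀ : Fin m → ℤ)
    (hR : {a : Fin m → ℤ | ∃ z : ℤ, ∑ i, (a i : ℝ) * Δ i = 2 * N * z}
        = {a : Fin m → ℤ | ∃ c : ℤ, a = c • a₀}) :
    (∑ i, (a₀ i : ℝ)) ≤ (N : ℝ) / ((N : ℝ) - (n : ℝ)) := by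
  have hnN : (n : ℝ) + 1 ≤ N := by exact_mod_cast hN
  have hN0 : (0 : ℝ) < N := by linarith [n.cast_nonneg (α := ℝ)]
  have key := sum_mul_one_sub_le_one_of_forall_exists_fract_le (fun i => Δ i / (2 * N)) a₀
    (x := n / N) (div_le_one_of_le₀ (by linarith) hN0.le)
    (fun t ht => (h t ht).imp fun i hi => by rw [← mul_div_assoc]; exact hi.2)
    (fun b c hb => by
      have hbR : b ∈ {a : Fin m → ℤ | ∃ z : ℤ, ∑ i, (a i : ℝ) * Δ i = 2 * N * z} :=
        ⟨c, by rw [← hb, mul_sum]; field_simp⟩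
      rwa [hR] at hbR)
  rw [le_div_iff₀ (by linarith), show (N : ℝ) - n = N * (1 - n / N) by field_simp]
  nlinarith

/-- Quantitative bound of Theorem 1.1(ii): if the group of resonances of `Δ`
modulo `2N` is generated by a single vector `a₀` with at least one strictly
positive component, then `∑ (a₀)_i ≤ N/(N-n)`. -/
theorem stmt_2 (n N m : ℕ) (hn : 0 < n) (hN : n + 1 ≤ N) (hm : 0 < m)
    (Δ : Fin m → ℝ)
    (h : ∀ k : ℕ, 0 < k →
      ∃ i : Fin m, Int.fract ((k : ℝ) * Δ i / (2 * N)) ∈ Set.Icc 0 ((n : ℝ) / N))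
    (a₀ : Fin m → ℤ)
    (hR : {a : Fin m → ℤ | ∃ z : ℤ, ∑ i, (a i : ℝ) * Δ i = 2 * N * z}
        = {a : Fin m → ℤ | ∃ c : ℤ, a = c • a₀})
    (hpos : ∃ i, 0 < a₀ i) :
    (∑ i, (a₀ i : ℝ)) ≤ (N : ℝ) / ((N : ℝ) - (n : ℝ)) :=
  stmt_2_general n N m hN Δ h a₀ hR
end

section
/- Let m ≥ 1 and let Γ and Γ' be closed subgroups of the torus T^m = (ℝ/ℤ)^m. Define R(Γ) = {a ∈ ℤ^m : a_1·x_1 + … + a_m·x_m = 0 in ℝ/ℤ for all x ∈ Γ}, and similarly R(Γ'). Then Γ ⊆ Γ' if and only if R(Γ') ⊆ R(Γ). -/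
/-!
Suppose every resonance of the closed subgroup `Γ'` is a resonance of `x`. For each character
`mFourier n`, the Haar averages of `mFourier n` over `Γ'` and over the coset `x + Γ'` agree:
if `n` is a resonance of `Γ'`, the character is `1` on both sets; otherwise it is a nontrivial
character of the compact group `Γ'`, so both averages vanish. These characters span a dense
subspace of `C(T^m, ℂ)`, so the two averages agree on every continuous function, and an Urysohn
function equal to `0` on `Γ'` and to `1` on `x + Γ'` then forces `x ∈ Γ'`.
-/

open MeasureTheory UnitAddTorus

section IntegralComp

variable {X K E : Type*} (𝕜 : Type*) [TopologicalSpace X] [TopologicalSpace K] [CompactSpace K]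
  [MeasurableSpace K] [BorelSpace K] [NormedAddCommGroup E] [NormedSpace ℝ E] [CompleteSpace E]
  [SecondCountableTopologyEither K E] [NormedRing 𝕜] [Module 𝕜 E] [IsBoundedSMul 𝕜 E]
  [SMulCommClass ℝ 𝕜 E] (μ : Measure K) [IsFiniteMeasure μ] (g : C(K, X))

noncomputable def integralCompCLM : C(X, E) →L[𝕜] E :=
  L1.integralCLM' 𝕜 ∘L ContinuousMap.toLp 1 μ 𝕜 ∘L
    { toFun := fun P => P.comp g
      map_add' := fun _ _ => rfl
      map_smul' := fun _ _ => rfl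
      cont := ContinuousMap.continuous_precomp g }

lemma integralCompCLM_apply (P : C(X, E)) : integralCompCLM 𝕜 μ g P = ∫ k, P (g k) ∂μ := by
  rw [integralCompCLM, ContinuousLinearMap.comp_apply, ContinuousLinearMap.comp_apply,
    ← L1.integral_eq', L1.integral_eq_integral]
  exact integral_congr_ae (ContinuousMap.coeFn_toLp μ (P.comp g))

end IntegralComp

lemma integral_eq_zero_of_map_add_eq_mul {K 𝕜 : Type*} [AddGroup K] [MeasurableSpace K]
    [MeasurableAdd K] [RCLike 𝕜] {μ : Measure K} [μ.IsAddLeftInvariant] {f : K → 𝕜} {y : K}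
    {c : 𝕜} (hc : c ≠ 1) (hf : ∀ g, f (y + g) = c * f g) : ∫ g, f g ∂μ = 0 := by
  have h : c * ∫ g, f g ∂μ = 1 * ∫ g, f g ∂μ := calc
    c * ∫ g, f g ∂μ = ∫ g, f (y + g) ∂μ := by simp only [hf, integral_const_mul]
    _ = 1 * ∫ g, f g ∂μ := by rw [integral_add_left_eq_self, one_mul]
  by_contra h0
  exact hc (mul_right_cancel₀ h0 h)

theorem AddSubgroup.mem_of_forall_integral_add_left_eq {G : Type*} [AddGroup G]
    [TopologicalSpace G] [IsTopologicalAddGroup G] [CompactSpace G] {H : AddSubgroup G}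
    (hH : IsClosed (H : Set G)) [MeasurableSpace H] [BorelSpace H] (μ : Measure H)
    [IsFiniteMeasure μ] [NeZero μ] {x : G}
    (hx : ∀ P : C(G, ℂ), ∫ h, P (x + h) ∂μ = ∫ h, P h ∂μ) : x ∈ H := by
  by_contra hxH
  have hdisj : Disjoint (H : Set G) ((x + ·) '' H) :=
    Set.disjoint_left.2 fun z hz ⟨w, hw, hxw⟩ => hxH (by simpa [← hxw] using H.sub_mem hz hw)
  obtain ⟨f, hf0, hf1, -⟩ := exists_continuous_zero_one_of_isCompact hH.isCompact
    ((Homeomorph.addLeft x).isClosedMap _ hH) hdisj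
  have h1 (h : H) : f (x + h) = 1 := hf1 ⟨h, h.2, rfl⟩
  have h0 (h : H) : f h = 0 := hf0 h.2
  exact measureReal_univ_ne_zero (by simpa [h1, h0] using hx ((Complex.ofRealCLM : C(ℝ, ℂ)).comp f))

namespace UnitAddTorus

variable {d : Type*} [Fintype d]

lemma mFourier_apply (n : d → ℤ) (x : UnitAddTorus d) :
    mFourier n x = AddCircle.toCircle (∑ i, n i • x i) := by
  simp only [mFourier, fourier_apply, ContinuousMap.coe_mk]
  induction (Finset.univ : Finset d) using Finset.cons_induction with
  | empty => simp
  | cons i s hi ih => simp [Finset.prod_cons, Finset.sum_cons, AddCircle.toCircle_add, ih]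

lemma mFourier_add_apply (n : d → ℤ) (x y : UnitAddTorus d) :
    mFourier n (x + y) = mFourier n x * mFourier n y := by
  simp only [mFourier_apply, Pi.add_apply, smul_add, Finset.sum_add_distrib,
    AddCircle.toCircle_add, Circle.coe_mul]

lemma mFourier_eq_one_iff {n : d → ℤ} {x : UnitAddTorus d} :
    mFourier n x = 1 ↔ ∑ i, n i • x i = 0 := by
  rw [mFourier_apply, ← Circle.coe_one, Circle.coe_inj, ← AddCircle.toCircle_zero,
    (AddCircle.injective_toCircle one_ne_zero).eq_iff]

lemma integral_mFourier_add_left_eq {Γ : AddSubgroup (UnitAddTorus d)} [MeasurableSpace Γ]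
    [BorelSpace Γ] (μ : Measure Γ) [μ.IsAddLeftInvariant] {x : UnitAddTorus d}
    (hx : ∀ n : d → ℤ, (∀ y ∈ Γ, ∑ i, n i • y i = 0) → ∑ i, n i • x i = 0) (n : d → ℤ) :
    ∫ g, mFourier n (x + g) ∂μ = ∫ g, mFourier n g ∂μ := by
  simp_rw [mFourier_add_apply n x, integral_const_mul]
  by_cases hn : ∀ y ∈ Γ, ∑ i, n i • y i = 0
  · rw [mFourier_eq_one_iff.2 (hx n hn), one_mul]
  · push Not at hn
    obtain ⟨y, hy, hne⟩ := hn
    rw [integral_eq_zero_of_map_add_eq_mul (y := (⟨y, hy⟩ : Γ)) (mt mFourier_eq_one_iff.1 hne)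
      fun g => mFourier_add_apply n y g, mul_zero]

end UnitAddTorus

theorem stmt_7_general (m : ℕ)
    (Γ Γ' : AddSubgroup (Fin m → AddCircle (1 : ℝ)))
    (hΓ' : IsClosed (Γ' : Set (Fin m → AddCircle (1 : ℝ)))) :
    Γ ≤ Γ' ↔
      {a : Fin m → ℤ | ∀ y ∈ Γ', ∑ i, a i • y i = 0}
        ⊆ {a : Fin m → ℤ | ∀ y ∈ Γ, ∑ i, a i • y i = 0} := by
  refine ⟨fun hle a ha y hy => ha y (hle hy), fun hR x hx => ?_⟩
  have : CompactSpace Γ' := isCompact_iff_compactSpace.mp hΓ'.isCompact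
  borelize ↥Γ'
  let μ : Measure Γ' := Measure.addHaar
  have hdense : Dense (Submodule.span ℂ (Set.range (mFourier (d := Fin m))) :
      Set C(UnitAddTorus (Fin m), ℂ)) :=
    Submodule.dense_iff_topologicalClosure_eq_top.2 span_mFourier_closure_eq_top
  have htranslate := ContinuousLinearMap.ext_on hdense
    (f := integralCompCLM ℂ μ ⟨(x + ·) ∘ (↑), by fun_prop⟩)
    (g := integralCompCLM ℂ μ ⟨(↑), by fun_prop⟩) <| by
      rintro _ ⟨n, rfl⟩
      simpa only [integralCompCLM_apply, ContinuousMap.coe_mk, Function.comp_apply] using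
        integral_mFourier_add_left_eq μ (fun n hn => hR hn x hx) n
  refine Γ'.mem_of_forall_integral_add_left_eq hΓ' μ fun P => ?_
  simpa only [integralCompCLM_apply, ContinuousMap.coe_mk, Function.comp_apply] using
    congr($htranslate P)

/-- For closed subgroups `Γ, Γ'` of the torus `T^m = (ℝ/ℤ)^m`, one has
`Γ ⊆ Γ'` if and only if `R(Γ') ⊆ R(Γ)`, where `R(·)` denotes the group of
resonances (characters vanishing on the subgroup). -/
theorem stmt_7 (m : ℕ) (hm : 1 ≤ m)
    (Γ Γ' : AddSubgroup (Fin m → AddCircle (1 : ℝ)))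
    (hΓ : IsClosed (Γ : Set (Fin m → AddCircle (1 : ℝ))))
    (hΓ' : IsClosed (Γ' : Set (Fin m → AddCircle (1 : ℝ)))) :
    Γ ≤ Γ' ↔
      {a : Fin m → ℤ | ∀ y ∈ Γ', ∑ i, a i • y i = 0}
        ⊆ {a : Fin m → ℤ | ∀ y ∈ Γ, ∑ i, a i • y i = 0} :=
  stmt_7_general m Γ Γ' hΓ'
end

section
/- Let Δ > 0 and C ≥ 0 be real numbers, let p ∈ {0, 1}, and let f : ℕ → ℤ satisfy |f(k) − k·Δ| ≤ C and f(k) ≡ p (mod 2) for all integers k ≥ 1. Then the sequence N ↦ (1/N)·∑_{l=0}^{N} (−1)^l · card{k ∈ ℕ : k ≥ 1 and f(k) = l} converges, as N → ∞, to (−1)^p / Δ. -/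
/-!
All values `f k` with `k ≥ 1` have the parity of `p`, so every nonzero term of the alternating
sum has sign `(-1)^p` and the sum is `(-1)^p` times the number of `k ≥ 1` with `0 ≤ f k ≤ N`.
Since `f k` stays within `C` of `k Δ`, that number differs from `N / Δ` by a bounded amount.
-/

open Filter Topology

lemma Set.ncard_eq_sum_ncard_inter_preimage {α β : Type*} [DecidableEq β] {s : Set α}
    (hs : s.Finite) {g : α → β} {t : Finset β} (hst : ∀ a ∈ s, g a ∈ t) :
    s.ncard = ∑ b ∈ t, (s ∩ g ⁻¹' {b}).ncard := by
  rw [Set.ncard_eq_toFinset_card s hs,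
    Finset.card_eq_sum_card_fiberwise fun a ha => hst a (by simpa using ha)]
  refine Finset.sum_congr rfl fun b _ => ?_
  rw [← Set.ncard_coe_finset]
  congr 1
  ext a
  simp

lemma tendsto_div_natCast_of_abs_sub_mul_le {u : ℕ → ℝ} {a D : ℝ}
    (h : ∀ N, |u N - N * a| ≤ D) : Tendsto (fun N : ℕ => u N / N) atTop (𝓝 a) := by
  have herr : Tendsto (fun N : ℕ => (u N - N * a) / N) atTop (𝓝 0) := by
    refine squeeze_zero_norm (fun N => ?_) (tendsto_const_div_atTop_nhds_zero_nat D)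
    rw [norm_div, Real.norm_natCast]
    exact div_le_div_of_nonneg_right (h N) N.cast_nonneg
  rw [← add_zero a]
  refine (herr.const_add a).congr' ?_
  filter_upwards [eventually_ne_atTop 0] with N hN
  field_simp
  ring

section LinearGrowth

variable {Δ C : ℝ} {f : ℕ → ℤ}

lemma setOf_mem_Icc_subset_Icc (hΔ : 0 < Δ) (hf : ∀ k : ℕ, 1 ≤ k → |(f k : ℝ) - k * Δ| ≤ C)
    (N : ℕ) : {k : ℕ | 1 ≤ k ∧ 0 ≤ f k ∧ f k ≤ N} ⊆ Set.Icc 1 ⌊(N + C) / Δ⌋₊ := by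
  rintro k ⟨hk, -, hkN⟩
  have hfk := (abs_le.mp (hf k hk)).1
  have hkN' : (f k : ℝ) ≤ N := by exact_mod_cast hkN
  refine ⟨hk, (Nat.le_floor_iff' (by omega)).mpr ?_⟩
  rw [le_div_iff₀ hΔ]
  linarith

lemma Icc_subset_setOf_mem_Icc (hΔ : 0 < Δ) (hf : ∀ k : ℕ, 1 ≤ k → |(f k : ℝ) - k * Δ| ≤ C)
    (N : ℕ) : Set.Icc (⌊C / Δ⌋₊ + 1) ⌊(N - C) / Δ⌋₊ ⊆ {k : ℕ | 1 ≤ k ∧ 0 ≤ f k ∧ f k ≤ N} := by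
  rintro k ⟨hCk, hkN⟩
  have hk : k ≠ 0 := by omega
  have hCk' : C < k * Δ := by
    rw [← div_lt_iff₀ hΔ]
    exact (Nat.floor_lt' hk).mp hCk
  have hkN' : k * Δ ≤ N - C := by
    rw [← le_div_iff₀ hΔ]
    exact (Nat.le_floor_iff' hk).mp hkN
  have hfk := abs_le.mp (hf k (by omega))
  refine ⟨by omega, ?_, ?_⟩
  · have : (0 : ℝ) ≤ f k := by linarith
    exact_mod_cast this
  · have : (f k : ℝ) ≤ N := by linarith
    exact_mod_cast this

lemma abs_ncard_setOf_mem_Icc_sub_le (hΔ : 0 < Δ)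
    (hf : ∀ k : ℕ, 1 ≤ k → |(f k : ℝ) - k * Δ| ≤ C) (N : ℕ) :
    |({k : ℕ | 1 ≤ k ∧ 0 ≤ f k ∧ f k ≤ N}.ncard : ℝ) - N / Δ| ≤ 2 * C / Δ + 1 := by
  have hC : 0 ≤ C := (abs_nonneg _).trans (hf 1 le_rfl)
  have hupper := Set.ncard_le_ncard (setOf_mem_Icc_subset_Icc hΔ hf N) (Set.finite_Icc _ _)
  have hlower := Set.ncard_le_ncard (Icc_subset_setOf_mem_Icc hΔ hf N)
    ((Set.finite_Icc _ _).subset (setOf_mem_Icc_subset_Icc hΔ hf N))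
  set n := {k : ℕ | 1 ≤ k ∧ 0 ≤ f k ∧ f k ≤ N}.ncard
  rw [Set.ncard_Icc_nat, Nat.add_sub_cancel] at hupper
  rw [Set.ncard_Icc_nat] at hlower
  have hupper' : (n : ℝ) ≤ ⌊(N + C) / Δ⌋₊ := by exact_mod_cast hupper
  have hlower' : (⌊(N - C) / Δ⌋₊ : ℝ) ≤ n + ⌊C / Δ⌋₊ := by
    exact_mod_cast (by omega : ⌊(N - C) / Δ⌋₊ ≤ n + ⌊C / Δ⌋₊)
  have := Nat.floor_le (by positivity : 0 ≤ (N + C) / Δ)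
  have := Nat.sub_one_lt_floor ((N - C) / Δ)
  have := Nat.floor_le (by positivity : 0 ≤ C / Δ)
  rw [add_div, sub_div] at *
  rw [abs_le, mul_div_assoc]
  constructor <;> linarith

end LinearGrowth

lemma sum_neg_one_pow_mul_ncard_fiber {f : ℕ → ℤ} {p N : ℕ}
    (hpar : ∀ k : ℕ, 1 ≤ k → f k % 2 = (p : ℤ))
    (hfin : {k : ℕ | 1 ≤ k ∧ 0 ≤ f k ∧ f k ≤ N}.Finite) :
    ∑ l ∈ Finset.range (N + 1), (-1 : ℝ) ^ l * ({k : ℕ | 1 ≤ k ∧ f k = (l : ℤ)}.ncard : ℝ) =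
      (-1 : ℝ) ^ p * ({k : ℕ | 1 ≤ k ∧ 0 ≤ f k ∧ f k ≤ N}.ncard : ℝ) := by
  have hsign : ∀ l : ℕ, (-1 : ℝ) ^ l * ({k : ℕ | 1 ≤ k ∧ f k = (l : ℤ)}.ncard : ℝ) =
      (-1 : ℝ) ^ p * ({k : ℕ | 1 ≤ k ∧ f k = (l : ℤ)}.ncard : ℝ) := by
    intro l
    obtain h | h := eq_or_ne {k : ℕ | 1 ≤ k ∧ f k = (l : ℤ)}.ncard 0
    · simp [h]
    obtain ⟨k, hk, hkl⟩ := Set.nonempty_of_ncard_ne_zero h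
    have hl : l % 2 = p := by have := hpar k hk; omega
    rw [neg_one_pow_eq_pow_mod_two, hl]
  rw [Finset.sum_congr rfl fun l _ => hsign l, ← Finset.mul_sum,
    Set.ncard_eq_sum_ncard_inter_preimage hfin (g := fun k => (f k).toNat)
      (t := Finset.range (N + 1)) fun k ⟨_, h0, hN⟩ => by simp only [Finset.mem_range]; omega]
  push_cast
  congr 1
  refine Finset.sum_congr rfl fun l hl => ?_
  rw [Finset.mem_range] at hl
  congr 2
  ext k
  simp only [Set.mem_ofPred_eq, Set.mem_inter_iff, Set.mem_preimage, Set.mem_singleton_iff]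
  omega

theorem stmt_11_general (Δ C : ℝ) (hΔ : 0 < Δ) (p : ℕ)
    (f : ℕ → ℤ)
    (hf : ∀ k : ℕ, 1 ≤ k → |(f k : ℝ) - k * Δ| ≤ C)
    (hpar : ∀ k : ℕ, 1 ≤ k → f k % 2 = (p : ℤ)) :
    Filter.Tendsto
      (fun N : ℕ => (1 / (N : ℝ)) *
        ∑ l ∈ Finset.range (N + 1),
          (-1 : ℝ) ^ l * ({k : ℕ | 1 ≤ k ∧ f k = (l : ℤ)}.ncard : ℝ))
      Filter.atTop (nhds ((-1 : ℝ) ^ p / Δ)) := by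
  have hcount : Tendsto (fun N : ℕ => ({k : ℕ | 1 ≤ k ∧ 0 ≤ f k ∧ f k ≤ N}.ncard : ℝ) / N)
      atTop (𝓝 Δ⁻¹) :=
    tendsto_div_natCast_of_abs_sub_mul_le fun N => by
      simpa only [div_eq_mul_inv] using abs_ncard_setOf_mem_Icc_sub_le hΔ hf N
  convert hcount.const_mul ((-1 : ℝ) ^ p) using 2 with N
  · rw [sum_neg_one_pow_mul_ncard_fiber hpar
      ((Set.finite_Icc _ _).subset (setOf_mem_Icc_subset_Icc hΔ hf N))]
    ring
  · rw [div_eq_mul_inv]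

/-- Contribution of a good orbit: if `|f(k) - kΔ| ≤ C` and `f(k) ≡ p (mod 2)`
for all `k ≥ 1`, with `Δ > 0` and `p ∈ {0,1}`, then
`(1/N)·∑_{l=0}^{N} (-1)^l · #{k ≥ 1 : f(k) = l} → (-1)^p / Δ`. -/
theorem stmt_11 (Δ C : ℝ) (hΔ : 0 < Δ) (hC : 0 ≤ C) (p : ℕ) (hp : p = 0 ∨ p = 1)
    (f : ℕ → ℤ)
    (hf : ∀ k : ℕ, 1 ≤ k → |(f k : ℝ) - k * Δ| ≤ C)
    (hpar : ∀ k : ℕ, 1 ≤ k → f k % 2 = (p : ℤ)) :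
    Filter.Tendsto
      (fun N : ℕ => (1 / (N : ℝ)) *
        ∑ l ∈ Finset.range (N + 1),
          (-1 : ℝ) ^ l * ({k : ℕ | 1 ≤ k ∧ f k = (l : ℤ)}.ncard : ℝ))
      Filter.atTop (nhds ((-1 : ℝ) ^ p / Δ)) :=
  stmt_11_general Δ C hΔ p f hf hpar
end

section
/- Let Δ > 0 and C ≥ 0 be real numbers, let p ∈ {0, 1}, and let f : ℕ → ℤ satisfy |f(k) − k·Δ| ≤ C and f(k) ≡ p (mod 2) for all odd integers k ≥ 1. Then the sequence N ↦ (1/N)·∑_{l=0}^{N} (−1)^l · card{k ∈ ℕ : k ≥ 1, k odd, and f(k) = l} converges, as N → ∞, to (−1)^p / (2Δ). -/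
open Finset Filter


private lemma oddCard (n : ℕ) :
    ((Finset.range n).filter (fun k => Odd k)).card = n / 2 := by
  have h : (Finset.range n).filter (fun k => Odd k)
      = (Finset.range (n / 2)).image (fun j => 2 * j + 1) := by
    ext k
    simp only [Finset.mem_filter, Finset.mem_range, Finset.mem_image, Nat.odd_iff]
    constructor
    · rintro ⟨hk, hodd⟩; exact ⟨k / 2, by omega, by omega⟩
    · rintro ⟨j, hj, rfl⟩; omega
  rw [h, Finset.card_image_of_injective _ (fun a b h => by omega)]
  simp

private lemma negOnePow (n : ℕ) : (-1 : ℝ) ^ n = (-1) ^ (n % 2) := by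
  conv_lhs => rw [← Nat.div_add_mod n 2]
  rw [pow_add, pow_mul]
  norm_num

/-- Contribution of a bad orbit: if `|f(k) - kΔ| ≤ C` and `f(k) ≡ p (mod 2)`
for all odd `k ≥ 1`, with `Δ > 0` and `p ∈ {0,1}`, then
`(1/N)·∑_{l=0}^{N} (-1)^l · #{k ≥ 1 odd : f(k) = l} → (-1)^p / (2Δ)`. -/
theorem stmt_12 (Δ C : ℝ) (hΔ : 0 < Δ) (hC : 0 ≤ C) (p : ℕ) (hp : p = 0 ∨ p = 1)
    (f : ℕ → ℤ)
    (hf : ∀ k : ℕ, 1 ≤ k → Odd k → |(f k : ℝ) - k * Δ| ≤ C)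
    (hpar : ∀ k : ℕ, 1 ≤ k → Odd k → f k % 2 = (p : ℤ)) :
    Filter.Tendsto
      (fun N : ℕ => (1 / (N : ℝ)) *
        ∑ l ∈ Finset.range (N + 1),
          (-1 : ℝ) ^ l * ({k : ℕ | 1 ≤ k ∧ Odd k ∧ f k = (l : ℤ)}.ncard : ℝ))
      Filter.atTop (nhds ((-1 : ℝ) ^ p / (2 * Δ))) := by
  classical
  -- upper cutoff
  set K : ℕ → ℕ := fun N => ⌈(((N : ℝ)) + C) / Δ⌉₊ with hK
  set T : ℕ → Finset ℕ := fun N =>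
    (Finset.range (K N + 1)).filter
      (fun k => 1 ≤ k ∧ Odd k ∧ 0 ≤ f k ∧ f k ≤ (N : ℤ)) with hT
  -- any k with the conditions and f k ≤ N is ≤ K N
  have hbound : ∀ N k : ℕ, 1 ≤ k → Odd k → f k ≤ (N : ℤ) → k ≤ K N := by
    intro N k hk1 hko hfk
    have h := (abs_le.mp (hf k hk1 hko)).1
    have h2 : (k : ℝ) * Δ ≤ (N : ℝ) + C := by
      have : ((f k : ℝ)) ≤ (N : ℝ) := by exact_mod_cast hfk
      linarith
    have h3 : (k : ℝ) ≤ ((N : ℝ) + C) / Δ := (le_div_iff₀ hΔ).mpr h2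
    have h4 : (k : ℝ) ≤ (K N : ℝ) := h3.trans (Nat.le_ceil _)
    exact_mod_cast h4
  -- Step A : rewrite the sum
  have hsum : ∀ N : ℕ,
      ∑ l ∈ Finset.range (N + 1),
        (-1 : ℝ) ^ l * ({k : ℕ | 1 ≤ k ∧ Odd k ∧ f k = (l : ℤ)}.ncard : ℝ)
      = (-1 : ℝ) ^ p * ((T N).card : ℝ) := by
    intro N
    have hSl : ∀ l ∈ Finset.range (N + 1),
        {k : ℕ | 1 ≤ k ∧ Odd k ∧ f k = (l : ℤ)}
        = ↑((Finset.range (K N + 1)).filter (fun k => 1 ≤ k ∧ Odd k ∧ f k = (l : ℤ))) := by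
      intro l hl
      rw [Finset.mem_range] at hl
      ext k
      simp only [Set.mem_setOf_eq, Finset.coe_filter, Finset.mem_range]
      constructor
      · rintro ⟨h1, h2, h3⟩
        refine ⟨Nat.lt_succ_of_le (hbound N k h1 h2 ?_), h1, h2, h3⟩
        rw [h3]; exact_mod_cast Nat.le_of_lt_succ hl
      · tauto
    -- replace each ncard by a Finset card
    have e1 : ∀ l ∈ Finset.range (N + 1),
        (-1 : ℝ) ^ l * ({k : ℕ | 1 ≤ k ∧ Odd k ∧ f k = (l : ℤ)}.ncard : ℝ)
        = (-1 : ℝ) ^ p *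
          (((Finset.range (K N + 1)).filter (fun k => 1 ≤ k ∧ Odd k ∧ f k = (l : ℤ))).card : ℝ) := by
      intro l hl
      rw [hSl l hl, Set.ncard_coe_finset]
      by_cases hne : ((Finset.range (K N + 1)).filter
          (fun k => 1 ≤ k ∧ Odd k ∧ f k = (l : ℤ))).card = 0
      · rw [hne]; simp
      · obtain ⟨k, hk⟩ := Finset.card_pos.mp (Nat.pos_of_ne_zero hne)
        simp only [Finset.mem_filter] at hk
        obtain ⟨-, hk1, hk2, hk3⟩ := hk
        have hm : f k % 2 = (p : ℤ) := hpar k hk1 hk2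
        rw [hk3] at hm
        have hlp : l % 2 = p % 2 := by
          rcases hp with rfl | rfl <;> omega
        rw [negOnePow l, negOnePow p, hlp]
    rw [Finset.sum_congr rfl e1, ← Finset.mul_sum]
    congr 1
    -- fiberwise counting
    have hmem : ∀ k ∈ T N, (f k).toNat ∈ Finset.range (N + 1) := by
      intro k hk
      simp only [hT, Finset.mem_filter] at hk
      rw [Finset.mem_range]
      omega
    rw [Finset.card_eq_sum_card_fiberwise hmem]
    push_cast
    refine Finset.sum_congr rfl fun l hl => ?_
    rw [Finset.mem_range] at hl
    have hfe : (T N).filter (fun k => (f k).toNat = l)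
        = (Finset.range (K N + 1)).filter (fun k => 1 ≤ k ∧ Odd k ∧ f k = (l : ℤ)) := by
      ext k
      simp only [hT, Finset.mem_filter, Finset.mem_range]
      constructor
      · rintro ⟨⟨hr, h1, h2, h3, h4⟩, h5⟩
        exact ⟨hr, h1, h2, by omega⟩
      · rintro ⟨hr, h1, h2, h3⟩
        exact ⟨⟨hr, h1, h2, by omega, by omega⟩, by omega⟩
    rw [hfe]
  -- Step B : upper bound
  have hub : ∀ N : ℕ, ((T N).card : ℝ) ≤ ((N : ℝ) + C) / Δ / 2 + 1 := by
    intro N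
    have hsub : T N ⊆ (Finset.range (K N + 1)).filter (fun k => Odd k) := by
      intro k hk
      simp only [hT, Finset.mem_filter] at hk ⊢
      tauto
    have h1 : (T N).card ≤ (K N + 1) / 2 :=
      (Finset.card_le_card hsub).trans_eq (oddCard _)
    have h2 : ((T N).card : ℝ) ≤ ((K N : ℝ) + 1) / 2 := by
      have ha : ((T N).card : ℝ) ≤ (((K N + 1) / 2 : ℕ) : ℝ) := by exact_mod_cast h1
      have hb : (((K N + 1) / 2 : ℕ) : ℝ) ≤ ((K N : ℝ) + 1) / 2 := by
        rw [le_div_iff₀ (by norm_num : (0:ℝ) < 2)]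
        have h3 : (K N + 1) / 2 * 2 ≤ K N + 1 := Nat.div_mul_le_self _ _
        exact_mod_cast h3
      linarith
    have h3 : (K N : ℝ) ≤ ((N : ℝ) + C) / Δ + 1 := by
      have h0 : (0 : ℝ) ≤ ((N : ℝ) + C) / Δ := div_nonneg (by positivity) hΔ.le
      exact (Nat.ceil_lt_add_one h0).le
    linarith
  -- Step C : lower bound, for large N
  set ja : ℕ := ⌈C / Δ⌉₊ with hja
  have hlb : ∀ N : ℕ, C + Δ * (2 * (ja : ℝ) + 4) ≤ (N : ℝ) →
      ((N : ℝ) - C) / Δ / 2 - (C / Δ + 3 / 2) ≤ ((T N).card : ℝ) := by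
    intro N hN
    have hNC : (0 : ℝ) ≤ ((N : ℝ) - C) / Δ := by
      apply div_nonneg _ hΔ.le
      nlinarith [Nat.cast_nonneg (α := ℝ) ja]
    obtain ⟨m, hm⟩ : ∃ m : ℕ, m = ⌊((N : ℝ) - C) / Δ⌋₊ := ⟨_, rfl⟩
    have hmle : (m : ℝ) ≤ ((N : ℝ) - C) / Δ := hm ▸ Nat.floor_le hNC
    have hmge : ((N : ℝ) - C) / Δ < (m : ℝ) + 1 := hm ▸ Nat.lt_floor_add_one _
    have hmbig : 2 * ja + 3 ≤ m := by
      have h1 : (2 * (ja : ℝ) + 4) ≤ ((N : ℝ) - C) / Δ := by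
        rw [le_div_iff₀ hΔ]; nlinarith
      have h2 : (2 * ja + 4 : ℕ) < m + 1 := by
        have : ((2 * ja + 4 : ℕ) : ℝ) < (m : ℝ) + 1 := by push_cast; linarith
        exact_mod_cast this
      omega
    obtain ⟨jb, hjb⟩ : ∃ jb : ℕ, jb = (m - 1) / 2 := ⟨_, rfl⟩
    -- key inclusion
    have hincl : (Finset.Icc ja jb).image (fun j => 2 * j + 1) ⊆ T N := by
      intro k hk
      simp only [Finset.mem_image, Finset.mem_Icc] at hk
      obtain ⟨j, ⟨hj1, hj2⟩, rfl⟩ := hk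
      have hk1 : 1 ≤ 2 * j + 1 := by omega
      have hko : Odd (2 * j + 1) := ⟨j, by omega⟩
      have habs := abs_le.mp (hf _ hk1 hko)
      have hkm : 2 * j + 1 ≤ m := by omega
      have hkr : ((2 * j + 1 : ℕ) : ℝ) * Δ ≤ (N : ℝ) - C := by
        have h1 : ((2 * j + 1 : ℕ) : ℝ) ≤ (m : ℝ) := by exact_mod_cast hkm
        calc ((2 * j + 1 : ℕ) : ℝ) * Δ ≤ (((N : ℝ) - C) / Δ) * Δ :=
              mul_le_mul_of_nonneg_right (h1.trans hmle) hΔ.le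
          _ = (N : ℝ) - C := div_mul_cancel₀ _ hΔ.ne'
      have hfleN : f (2 * j + 1) ≤ (N : ℤ) := by
        have : ((f (2 * j + 1) : ℝ)) ≤ (N : ℝ) := by linarith [habs.2]
        exact_mod_cast this
      have hCk : C ≤ ((2 * j + 1 : ℕ) : ℝ) * Δ := by
        have h1 : C / Δ ≤ (ja : ℝ) := Nat.le_ceil _
        have h2 : (ja : ℝ) ≤ ((2 * j + 1 : ℕ) : ℝ) := by
          have : ja ≤ 2 * j + 1 := by omega
          exact_mod_cast this
        have h3 : C ≤ (ja : ℝ) * Δ := by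
          rw [div_le_iff₀ hΔ] at h1; linarith
        nlinarith
      have hfge : 0 ≤ f (2 * j + 1) := by
        have : (0 : ℝ) ≤ ((f (2 * j + 1) : ℝ)) := by linarith [habs.1]
        exact_mod_cast this
      simp only [hT, Finset.mem_filter, Finset.mem_range]
      exact ⟨Nat.lt_succ_of_le (hbound N _ hk1 hko hfleN), hk1, hko, hfge, hfleN⟩
    have hcard : jb + 1 - ja ≤ (T N).card := by
      have h1 : (Finset.Icc ja jb).card ≤ (T N).card := by
        rw [← Finset.card_image_of_injective (Finset.Icc ja jb)
          (fun a b h => by simp only [] at h; omega : Function.Injective (fun j => 2 * j + 1))]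
        exact Finset.card_le_card hincl
      rwa [Nat.card_Icc] at h1
    -- real estimates
    have hjab : ja + 1 ≤ jb := by omega
    have hcr : ((jb : ℝ) + 1 - (ja : ℝ)) ≤ ((T N).card : ℝ) := by
      have h1 : ((jb + 1 - ja : ℕ) : ℝ) ≤ ((T N).card : ℝ) := by exact_mod_cast hcard
      rw [Nat.cast_sub (by omega)] at h1
      push_cast at h1
      linarith
    have hjbr : ((m : ℝ) - 2) / 2 ≤ (jb : ℝ) := by
      have h1 : m ≤ 2 * jb + 2 := by omega
      have h2 : (m : ℝ) ≤ 2 * (jb : ℝ) + 2 := by exact_mod_cast h1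
      linarith
    have hjar : (ja : ℝ) ≤ C / Δ + 1 :=
      (Nat.ceil_lt_add_one (div_nonneg hC hΔ.le)).le
    have hmr : ((N : ℝ) - C) / Δ - 1 < (m : ℝ) := by linarith
    linarith
  -- Step D : the limit of card / N
  have hmain : Tendsto (fun N : ℕ => ((T N).card : ℝ) / (N : ℝ)) atTop
      (nhds (1 / (2 * Δ))) := by
    have hhi : Tendsto (fun N : ℕ => 1 / (2 * Δ) + (C / (2 * Δ) + 1) / (N : ℝ)) atTop
        (nhds (1 / (2 * Δ))) := by
      have := tendsto_const_div_atTop_nhds_zero_nat (C / (2 * Δ) + 1)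
      simpa using tendsto_const_nhds.add this
    have hlo : Tendsto (fun N : ℕ => 1 / (2 * Δ) - (3 * C / (2 * Δ) + 3 / 2) / (N : ℝ)) atTop
        (nhds (1 / (2 * Δ))) := by
      have := tendsto_const_div_atTop_nhds_zero_nat (3 * C / (2 * Δ) + 3 / 2)
      simpa using tendsto_const_nhds.sub this
    refine tendsto_of_tendsto_of_tendsto_of_le_of_le' hlo hhi ?_ ?_
    · filter_upwards [eventually_ge_atTop (⌈C + Δ * (2 * (ja : ℝ) + 4)⌉₊ + 1)] with N h1
      have hN1 : (C + Δ * (2 * (ja : ℝ) + 4)) ≤ (N : ℝ) := by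
        have h2 : (⌈C + Δ * (2 * (ja : ℝ) + 4)⌉₊ : ℝ) ≤ (N : ℝ) := by
          exact_mod_cast le_of_lt (by exact_mod_cast h1 : (⌈C + Δ * (2 * (ja : ℝ) + 4)⌉₊ : ℕ) < N)
        exact (Nat.le_ceil _).trans h2
      have hN0 : (0 : ℝ) < (N : ℝ) := by
        have : 1 ≤ N := by omega
        exact_mod_cast Nat.lt_of_lt_of_le Nat.zero_lt_one this
      have hlbN := hlb N hN1
      rw [le_div_iff₀ hN0]
      have hexp : (1 / (2 * Δ) - (3 * C / (2 * Δ) + 3 / 2) / (N : ℝ)) * (N : ℝ)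
          = ((N : ℝ) - C) / Δ / 2 - (C / Δ + 3 / 2) := by
        field_simp
        ring
      rw [hexp]
      exact hlbN
    · filter_upwards [eventually_ge_atTop 1] with N h1
      have hN0 : (0 : ℝ) < (N : ℝ) := by exact_mod_cast h1
      rw [div_le_iff₀ hN0]
      have hexp : (1 / (2 * Δ) + (C / (2 * Δ) + 1) / (N : ℝ)) * (N : ℝ)
          = ((N : ℝ) + C) / Δ / 2 + 1 := by
        field_simp
        ring
      rw [hexp]
      exact hub N
  -- Conclusion
  have hfinal := hmain.const_mul ((-1 : ℝ) ^ p)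
  rw [show (-1 : ℝ) ^ p * (1 / (2 * Δ)) = (-1 : ℝ) ^ p / (2 * Δ) by ring] at hfinal
  refine hfinal.congr fun N => ?_
  rw [hsum N]
  ring
end
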